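/- arXiv:2605.18093 — 7 statements merged into one kernel-verified Lean document; each statement's English description precedes it below -/
import Mathlib

section
/- Let N be a positive integer and 0 < χ₁ < ... < χ_N. Define ω_{ij} = 2√(χ_i χ_j)/(χ_i + χ_j) and the diagonal matrix γ = diag(γ_i) with γ_i = ∏_{k ≠ i} (χ_i + χ_k)/(χ_i − χ_k). Then ω is invertible with ω⁻¹ = γ ω γ. -/
/-!
With `S = diag √χ`, one has `ω γ = S M S⁻¹` for the weighted Cauchy matrix
`M i j = 2 χ j γ j / (χ i + χ j)`, so `ω (γ ω γ) = (ω γ)² = S M² S⁻¹` and it suffices that `M` is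
an involution. Entrywise this says `∑ k, 2 χ k γ k / ((χ i + χ k) (χ k + χ j)) = δ i j / (2 χ i γ i)`,
which is Lagrange interpolation at the nodes `χ k` of the polynomial `∏ l ≠ i, (X + χ l)` (degree
`N - 1`), evaluated at `-χ j`, where it vanishes unless `i = j`.
-/

open Finset Polynomial Lagrange

variable {K ι : Type*} [Field K] [Fintype ι] [DecidableEq ι]

theorem sum_nodalWeight_mul_eval_div {v : ι → K} (hv : Function.Injective v) {f : K[X]}
    (hf : f.degree < Fintype.card ι) {x : K} (hx : ∀ k, x ≠ v k) :
    ∑ k, nodalWeight univ v k * f.eval (v k) / (x - v k) = f.eval x / (nodal univ v).eval x := by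
  have h := eval_interpolate_not_at_node (s := univ) (fun k => f.eval (v k)) fun k _ => hx k
  rw [← eq_interpolate hv.injOn hf] at h
  rw [h, mul_div_cancel_left₀ _ (eval_nodal_not_at_node fun k _ => hx k)]
  exact sum_congr rfl fun k _ => by ring

theorem mul_self_eq_one_of_eq_conj {M : Type*} [Monoid M] {a m s t : M} (hts : t * s = 1)
    (hst : s * t = 1) (ha : a = s * m * t) (hm : m * m = 1) : a * a = 1 := by
  rw [ha, show s * m * t * (s * m * t) = s * (m * (t * s) * m) * t by simp only [mul_assoc], hts,
    mul_one, hm, mul_one, hst]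

def cauchyWeight (χ : ι → K) (i : ι) : K :=
  ∏ k ∈ univ.erase i, (χ i + χ k) / (χ i - χ k)

def weightedCauchyMatrix (χ : ι → K) : Matrix ι ι K :=
  Matrix.of fun i j => 2 * χ j * cauchyWeight χ j / (χ i + χ j)

section

variable {χ : ι → K}

theorem nodalWeight_mul_eval_nodal_neg_erase_mul_add (i k : ι) :
    nodalWeight univ χ k * (nodal (univ.erase i) (-χ)).eval (χ k) * (χ k + χ i)
      = 2 * χ k * cauchyWeight χ k := by
  have hprod : (χ k + χ i) * ∏ l ∈ univ.erase i, (χ k + χ l)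
      = (χ k + χ k) * ∏ l ∈ univ.erase k, (χ k + χ l) := by
    rw [mul_prod_erase _ (fun l => χ k + χ l) (mem_univ i),
      mul_prod_erase _ (fun l => χ k + χ l) (mem_univ k)]
  simp only [eval_nodal, Pi.neg_apply, sub_neg_eq_add, nodalWeight, cauchyWeight, div_eq_mul_inv,
    prod_mul_distrib]
  linear_combination (∏ l ∈ univ.erase k, (χ k - χ l)⁻¹) * hprod

theorem cauchyWeight_mul_prod_sub (hχ : Function.Injective χ) (i : ι) :
    cauchyWeight χ i * ∏ l ∈ univ.erase i, (χ l - χ i) = ∏ l ∈ univ.erase i, -(χ i + χ l) := by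
  rw [cauchyWeight, ← prod_mul_distrib]
  refine prod_congr rfl fun l hl => ?_
  have : χ i - χ l ≠ 0 := sub_ne_zero.mpr (hχ.ne (ne_of_mem_erase hl).symm)
  field_simp
  ring

theorem cauchyWeight_ne_zero (hχ : Function.Injective χ) (hadd : ∀ i j, χ i + χ j ≠ 0) (i : ι) :
    cauchyWeight χ i ≠ 0 :=
  prod_ne_zero_iff.mpr fun l hl =>
    div_ne_zero (hadd i l) (sub_ne_zero.mpr (hχ.ne (ne_of_mem_erase hl).symm))

theorem eval_nodal_neg_erase_div_eval_nodal (hχ : Function.Injective χ) (i : ι) :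
    (nodal (univ.erase i) (-χ)).eval (-χ i) / (nodal univ χ).eval (-χ i)
      = -(2 * χ i * cauchyWeight χ i)⁻¹ := by
  have hsub : ∏ l ∈ univ.erase i, (χ l - χ i) ≠ 0 :=
    prod_ne_zero_iff.mpr fun l hl => sub_ne_zero.mpr (hχ.ne (ne_of_mem_erase hl))
  have hnode : (nodal univ χ).eval (-χ i) = -(2 * χ i) * ∏ l ∈ univ.erase i, -(χ i + χ l) := by
    rw [eval_nodal, ← mul_prod_erase _ _ (mem_univ i)]
    congr 1
    · ring
    · exact prod_congr rfl fun l _ => by ring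
  rw [hnode, ← cauchyWeight_mul_prod_sub hχ, eval_nodal]
  simp only [Pi.neg_apply, sub_neg_eq_add, neg_add_eq_sub]
  field_simp

theorem sum_cauchyWeight_div_add_mul_add (hχ : Function.Injective χ)
    (hadd : ∀ i j, χ i + χ j ≠ 0) (i j : ι) :
    ∑ k, 2 * χ k * cauchyWeight χ k / ((χ i + χ k) * (χ k + χ j))
      = if i = j then (2 * χ i * cauchyWeight χ i)⁻¹ else 0 := by
  have hx : ∀ k, -χ j ≠ χ k := fun k h => hadd j k (by rw [← h]; ring)
  have hdeg : (nodal (univ.erase i) (-χ)).degree < Fintype.card ι := by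
    rw [degree_nodal, ← card_univ]
    exact_mod_cast card_erase_lt_of_mem (mem_univ i)
  have hterm : ∀ k, nodalWeight univ χ k * (nodal (univ.erase i) (-χ)).eval (χ k) / (-χ j - χ k)
      = -(2 * χ k * cauchyWeight χ k / ((χ i + χ k) * (χ k + χ j))) := fun k => by
    rw [eq_div_of_mul_eq (hadd k i) (nodalWeight_mul_eval_nodal_neg_erase_mul_add i k),
      show -χ j - χ k = -(χ k + χ j) by ring]
    have := hadd k j
    field_simp
    ring
  have key := sum_nodalWeight_mul_eval_div hχ hdeg hx
  simp only [hterm, sum_neg_distrib] at key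
  rw [← neg_eq_iff_eq_neg.mpr key.symm]
  split_ifs with hij
  · rw [hij, eval_nodal_neg_erase_div_eval_nodal hχ, neg_neg]
  · rw [← Pi.neg_apply χ j, eval_nodal_at_node (v := -χ) (mem_erase.mpr ⟨Ne.symm hij, mem_univ j⟩),
      zero_div, neg_zero]

theorem weightedCauchyMatrix_mul_self (hχ : Function.Injective χ)
    (hadd : ∀ i j, χ i + χ j ≠ 0) : weightedCauchyMatrix χ * weightedCauchyMatrix χ = 1 := by
  ext i j
  have hterm : ∀ k, weightedCauchyMatrix χ i k * weightedCauchyMatrix χ k j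
      = 2 * χ j * cauchyWeight χ j * (2 * χ k * cauchyWeight χ k / ((χ i + χ k) * (χ k + χ j))) :=
    fun k => by
      simp only [weightedCauchyMatrix, Matrix.of_apply]
      rw [div_mul_div_comm, mul_div_assoc']
      ring
  rw [Matrix.mul_apply, sum_congr rfl fun k _ => hterm k, ← mul_sum,
    sum_cauchyWeight_div_add_mul_add hχ hadd, Matrix.one_apply]
  split_ifs with hij
  · subst hij
    have h2χ : 2 * χ i ≠ 0 := by rw [two_mul]; exact hadd i i
    exact mul_inv_cancel₀ (mul_ne_zero h2χ (cauchyWeight_ne_zero hχ hadd i))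
  · exact mul_zero _

end

theorem of_sqrt_mul_div_add_mul_diagonal_cauchyWeight {χ : ι → ℝ} (hpos : ∀ i, 0 < χ i) :
    Matrix.of (fun i j => 2 * √(χ i * χ j) / (χ i + χ j)) * Matrix.diagonal (cauchyWeight χ)
      = Matrix.diagonal (fun i => √(χ i)) * weightedCauchyMatrix χ
        * Matrix.diagonal (fun i => (√(χ i))⁻¹) := by
  ext i j
  simp only [Matrix.mul_diagonal, Matrix.diagonal_mul, Matrix.of_apply, weightedCauchyMatrix,
    Real.sqrt_mul (hpos i).le]
  have := (Real.sqrt_pos.mpr (hpos j)).ne'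
  have := (add_pos (hpos i) (hpos j)).ne'
  field_simp
  rw [Real.sq_sqrt (hpos j).le]

theorem cauchy_like_matrix_inv_general (N : ℕ) (χ : Fin N → ℝ)
    (hpos : ∀ i, 0 < χ i) (hmono : StrictMono χ) :
    let ω : Matrix (Fin N) (Fin N) ℝ :=
      Matrix.of fun i j => 2 * Real.sqrt (χ i * χ j) / (χ i + χ j)
    let γ : Matrix (Fin N) (Fin N) ℝ :=
      Matrix.diagonal fun i => ∏ k ∈ Finset.univ.erase i, (χ i + χ k) / (χ i - χ k)
    IsUnit ω ∧ ω⁻¹ = γ * ω * γ := by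
  intro ω γ
  have hsqrt : ∀ i, √(χ i) ≠ 0 := fun i => (Real.sqrt_pos.mpr (hpos i)).ne'
  have hinv : ω * (γ * ω * γ) = 1 := by
    rw [show ω * (γ * ω * γ) = ω * γ * (ω * γ) by simp only [Matrix.mul_assoc]]
    refine mul_self_eq_one_of_eq_conj ?_ ?_ (of_sqrt_mul_div_add_mul_diagonal_cauchyWeight hpos)
      (weightedCauchyMatrix_mul_self hmono.injective fun i j => (add_pos (hpos i) (hpos j)).ne')
    all_goals
      rw [Matrix.diagonal_mul_diagonal, ← Matrix.diagonal_one]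
      exact congrArg _ (funext fun i => by field_simp [hsqrt i])
  exact ⟨IsUnit.of_mul_eq_one _ hinv, Matrix.inv_eq_right_inv hinv⟩

/-- The Cauchy-like matrix `ω i j = 2√(χ i χ j)/(χ i + χ j)` built from strictly
ordered positive reals is invertible, with inverse `γ ω γ` where `γ` is the
diagonal matrix with entries `γ i = ∏_{k ≠ i} (χ i + χ k)/(χ i − χ k)`. -/
theorem cauchy_like_matrix_inv (N : ℕ) (hN : 0 < N) (χ : Fin N → ℝ)
    (hpos : ∀ i, 0 < χ i) (hmono : StrictMono χ) :
    let ω : Matrix (Fin N) (Fin N) ℝ :=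
      Matrix.of fun i j => 2 * Real.sqrt (χ i * χ j) / (χ i + χ j)
    let γ : Matrix (Fin N) (Fin N) ℝ :=
      Matrix.diagonal fun i => ∏ k ∈ Finset.univ.erase i, (χ i + χ k) / (χ i - χ k)
    IsUnit ω ∧ ω⁻¹ = γ * ω * γ :=
  cauchy_like_matrix_inv_general N χ hpos hmono
end

section
/- Let N be a positive integer, let 0 < χ₁ < ... < χ_N, and set S_{ij} = (χ_i − χ_j)/(χ_i + χ_j) and S_r = ∏_{i,j ∈ r, i < j} S_{ij}² for any subset r ⊆ {1,...,N}. Let Ψ be the diagonal matrix with positive diagonal entries Ψ_i and ω the matrix with entries ω_{ij} = 2√(χ_i χ_j)/(χ_i + χ_j). Then det(Ψ² + ω) = ∑_{p ⊆ {1,...,N}} S_{{1,...,N} \ p} · ∏_{i ∈ p} Ψ_i². -/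
/-!
Expanding `det (diagonal d + A)` multilinearly in the rows writes it as `∑ₚ (∏_{i∈p} dᵢ) · det A[pᶜ]`,
where `A[r]` is the principal minor on `r`. For `A = ω` every principal minor is again a matrix
of the same shape, and `ω = D C D` with `D = diag √(2χᵢ)` and `C` the Cauchy matrix `1/(χᵢ + χⱼ)`,
so Cauchy's determinant formula gives `det ω[r] = S_r`.
-/

open Finset Matrix

theorem det_succ_column_zero_of_succ_eq_zero {R : Type*} [CommRing R] {n : ℕ}
    (A : Matrix (Fin (n + 1)) (Fin (n + 1)) R) (h : ∀ i : Fin n, A i.succ 0 = 0) :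
    A.det = A 0 0 * (A.submatrix Fin.succ Fin.succ).det := by
  simp [det_succ_column_zero A, Fin.sum_univ_succ, h]

theorem det_cauchy {K : Type*} [Field K] {n : ℕ} (x y : Fin n → K)
    (h : ∀ i j, x i + y j ≠ 0) :
    det (of fun i j => (x i + y j)⁻¹) =
      ∏ i, ((x i + y i)⁻¹ *
        ∏ j ∈ Ioi i, (x j - x i) * (y j - y i) / ((x i + y j) * (x j + y i))) := by
  induction n with
  | zero => simp
  | succ n ih =>
    let c : Fin (n + 1) → K := fun i => if i = 0 then 0 else (x 0 + y 0) / (x i + y 0)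
    let B : Matrix (Fin (n + 1)) (Fin (n + 1)) K :=
      of fun i j => (x i + y j)⁻¹ - c i * (x 0 + y j)⁻¹
    let u : Fin n → K := fun i => (x i.succ - x 0) / (x i.succ + y 0)
    let v : Fin n → K := fun j => (y j.succ - y 0) / (x 0 + y j.succ)
    have hc0 : c 0 = 0 := if_pos rfl
    -- Subtracting `c i` times row `0` from row `i` clears column `0` below the corner; the
    -- remaining minor is the Cauchy matrix of the tails with rows scaled by `u`, columns by `v`.
    have hrow : det (of fun i j => (x i + y j)⁻¹) = B.det :=
      det_eq_of_forall_row_eq_smul_add_const c 0 hc0 fun i j => by simp [B, hc0]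
    have hcol : ∀ i : Fin n, B i.succ 0 = 0 := fun i => by
      have := h i.succ 0; have := h 0 0
      simp only [B, c, of_apply, Fin.succ_ne_zero, if_false]
      field_simp
      ring
    have hsub : B.submatrix Fin.succ Fin.succ =
        of fun i j => v j * (u i * (x i.succ + y j.succ)⁻¹) := by
      ext i j
      have := h i.succ j.succ; have := h i.succ 0; have := h 0 j.succ
      simp only [B, c, submatrix_apply, of_apply, Fin.succ_ne_zero, if_false, u, v]
      field_simp
      ring
    have hscale : det (of fun i j => v j * (u i * (x i.succ + y j.succ)⁻¹)) =
        (∏ j, v j) * ((∏ i, u i) * det (of fun i j : Fin n => (x i.succ + y j.succ)⁻¹)) := by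
      rw [← det_mul_column, ← det_mul_row]
      rfl
    rw [hrow, det_succ_column_zero_of_succ_eq_zero B hcol, hsub, hscale, ih _ _ (fun i j => h _ _),
      Fin.prod_univ_succ, Fin.prod_Ioi_zero]
    have hcorner : B 0 0 = (x 0 + y 0)⁻¹ := by simp [B, hc0]
    have huv : ∏ j : Fin n, (x j.succ - x 0) * (y j.succ - y 0) /
        ((x 0 + y j.succ) * (x j.succ + y 0)) = (∏ j, v j) * ∏ i, u i := by
      rw [← prod_mul_distrib]
      exact prod_congr rfl fun j _ => by rw [div_mul_div_comm, mul_comm (y j.succ - y 0)]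
    simp only [Fin.prod_Ioi_succ]
    rw [hcorner, huv]
    ring

section

variable {R : Type*} [CommRing R] {n : Type*} [Fintype n] [DecidableEq n]

theorem det_eq_det_submatrix_compl_of_row_eq_one (M : Matrix n n R) (s : Finset n)
    (hs : ∀ i ∈ s, M i = (1 : Matrix n n R) i) :
    M.det = (M.submatrix ((↑) : ↥sᶜ → n) (↑)).det := by
  have hone : toSquareBlockProp M (fun i => i ∉ sᶜ) = 1 := by
    ext i j
    simp [toSquareBlockProp_def, hs i (by simpa using i.2), one_apply, Subtype.ext_iff]
  rw [twoBlockTriangular_det M (· ∈ sᶜ) fun i hi j hj => ?_, hone, det_one, mul_one]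
  · congr!
  · rw [hs i (by simpa using hi), one_apply_ne]
    rintro rfl
    exact hi hj

theorem det_diagonal_add (d : n → R) (A : Matrix n n R) :
    det (diagonal d + A) =
      ∑ s : Finset n, (∏ i ∈ s, d i) * det (A.submatrix ((↑) : ↥sᶜ → n) (↑)) := by
  refine ((detRowAlternating : (n → R) [⋀^n]→ₗ[R] R).map_add_univ (diagonal d) A).trans
    (sum_congr rfl fun s _ => ?_)
  let B : Matrix n n R := of fun i j => if i ∈ s then (1 : Matrix n n R) i j else A i j
  have hrows : s.piecewise (diagonal d) A = s.piecewise (fun i => d i • B i) B := by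
    ext i j
    by_cases hi : i ∈ s <;> simp [B, Finset.piecewise, hi, diagonal_apply, one_apply]
  have hB : ∀ i ∈ s, B i = (1 : Matrix n n R) i := fun i hi => funext fun j => if_pos hi
  have hsmul : detRowAlternating (s.piecewise (fun i => d i • B i) B) =
      (∏ i ∈ s, d i) • detRowAlternating B :=
    detRowAlternating.toMultilinearMap.map_piecewise_smul d B s
  rw [hrows, hsmul, smul_eq_mul]
  refine congrArg _ ((det_eq_det_submatrix_compl_of_row_eq_one B s hB).trans ?_)
  congr 1
  ext i j
  simp [B, mem_compl.mp i.2]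

end

theorem det_two_mul_sqrt_mul_div_add {n : ℕ} (x : Fin n → ℝ) (hx : ∀ i, 0 < x i) :
    det (of fun i j => 2 * √(x i * x j) / (x i + x j)) =
      ∏ i, ∏ j ∈ Ioi i, ((x i - x j) / (x i + x j)) ^ 2 := by
  have hsqrt : ∀ i j, 2 * √(x i * x j) = √(2 * x j) * √(2 * x i) := fun i j => by
    have := hx i; have := hx j
    rw [← Real.sqrt_mul (by positivity), ← Real.sqrt_sq (by positivity : 0 ≤ 2 * √(x i * x j)),
      mul_pow, Real.sq_sqrt (by positivity)]
    ring_nf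
  have hscale : det (of fun i j => 2 * √(x i * x j) / (x i + x j)) =
      (∏ j, √(2 * x j)) * ((∏ i, √(2 * x i)) * det (of fun i j => (x i + x j)⁻¹)) := by
    rw [← det_mul_column, ← det_mul_row]
    congr 1
    ext i j
    simp only [of_apply, hsqrt, div_eq_mul_inv, mul_assoc]
  rw [hscale, det_cauchy x x fun i j => (add_pos (hx i) (hx j)).ne', ← mul_assoc,
    ← prod_mul_distrib, ← prod_mul_distrib]
  refine prod_congr rfl fun i _ => ?_
  have hxi := hx i
  rw [← mul_assoc, Real.mul_self_sqrt (by positivity), ← two_mul,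
    mul_inv_cancel₀ (by positivity), one_mul]
  refine prod_congr rfl fun j _ => ?_
  rw [div_pow, add_comm (x j)]
  ring

theorem prod_filter_lt_eq_prod_Ioi_orderEmbOfFin {α M : Type*} [LinearOrder α] [CommMonoid M]
    (s : Finset α) (f : α → α → M) :
    ∏ i ∈ s, ∏ j ∈ s with i < j, f i j =
      ∏ a, ∏ b ∈ Ioi a, f (s.orderEmbOfFin rfl a) (s.orderEmbOfFin rfl b) := by
  set e := s.orderEmbOfFin rfl
  have hfilter : ∀ a, (s.filter fun j => e a < j) = (Ioi a).map e.toEmbedding := fun a => by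
    ext j
    simp only [mem_filter, mem_map, mem_Ioi, RelEmbedding.coe_toEmbedding]
    constructor
    · rintro ⟨hj, hlt⟩
      obtain ⟨b, rfl⟩ : j ∈ Set.range e := by rwa [range_orderEmbOfFin]
      exact ⟨b, e.lt_iff_lt.mp hlt, rfl⟩
    · rintro ⟨b, hab, rfl⟩
      exact ⟨orderEmbOfFin_mem s rfl b, e.lt_iff_lt.mpr hab⟩
  calc ∏ i ∈ s, ∏ j ∈ s with i < j, f i j
      = ∏ i ∈ univ.map e.toEmbedding, ∏ j ∈ s with i < j, f i j := by
        rw [map_orderEmbOfFin_univ]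
    _ = _ := by
        simp only [prod_map, RelEmbedding.coe_toEmbedding, hfilter]

theorem det_submatrix_eq_det_submatrix_orderEmbOfFin {α R : Type*} [LinearOrder α] [CommRing R]
    (A : Matrix α α R) (s : Finset α) :
    det (A.submatrix ((↑) : ↥s → α) (↑)) =
      det (A.submatrix (s.orderEmbOfFin rfl) (s.orderEmbOfFin rfl)) := by
  rw [← det_submatrix_equiv_self (s.orderIsoOfFin rfl).toEquiv]
  rfl

theorem det_psi_sq_add_omega_general (N : ℕ) (χ : Fin N → ℝ)
    (hpos : ∀ i, 0 < χ i)
    (ψ : Fin N → ℝ) :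
    Matrix.det
        (Matrix.diagonal (fun i => ψ i ^ 2) +
          Matrix.of fun i j : Fin N => 2 * Real.sqrt (χ i * χ j) / (χ i + χ j)) =
      ∑ p : Finset (Fin N),
        (∏ i ∈ pᶜ, ∏ j ∈ pᶜ.filter (fun j => i < j),
            ((χ i - χ j) / (χ i + χ j)) ^ 2) *
          ∏ i ∈ p, ψ i ^ 2 := by
  rw [det_diagonal_add]
  refine sum_congr rfl fun p _ => ?_
  rw [mul_comm, det_submatrix_eq_det_submatrix_orderEmbOfFin,
    prod_filter_lt_eq_prod_Ioi_orderEmbOfFin]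
  exact congrArg (· * _) (det_two_mul_sqrt_mul_div_add _ fun i => hpos _)

/-- Partial-wave expansion of the KdV `N`-soliton tau function:
`det(Ψ² + ω) = ∑_{p ⊆ {1,…,N}} S_{pᶜ} ∏_{i∈p} Ψ_i²`, where
`S_r = ∏_{i<j ∈ r} S_{ij}²` with `S_{ij} = (χ_i − χ_j)/(χ_i + χ_j)`,
`ω_{ij} = 2√(χ_i χ_j)/(χ_i + χ_j)`, and `Ψ` diagonal with positive entries. -/
theorem det_psi_sq_add_omega (N : ℕ) (hN : 0 < N) (χ : Fin N → ℝ)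
    (hpos : ∀ i, 0 < χ i) (hmono : StrictMono χ)
    (ψ : Fin N → ℝ) (hψ : ∀ i, 0 < ψ i) :
    Matrix.det
        (Matrix.diagonal (fun i => ψ i ^ 2) +
          Matrix.of fun i j : Fin N => 2 * Real.sqrt (χ i * χ j) / (χ i + χ j)) =
      ∑ p : Finset (Fin N),
        (∏ i ∈ pᶜ, ∏ j ∈ pᶜ.filter (fun j => i < j),
            ((χ i - χ j) / (χ i + χ j)) ^ 2) *
          ∏ i ∈ p, ψ i ^ 2 :=
  det_psi_sq_add_omega_general N χ hpos ψ
end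

section
/- Let N ∈ ℕ, let ε > 0, let y ∈ ℝ^N, and let φ̃_{ij} ∈ ℝ for all i ≠ j in {1,...,N}. Let sgn_ε : ℝ → ℝ be any continuous function with |sgn_ε(d)| ≤ 1 for all d and sgn_ε(d) = sign(d) for |d| ≥ ε. Then there exists d ∈ ℝ^N such that y_i = d_i − (1/2) ∑_{j ≠ i} sgn_ε(d_j) · φ̃_{ij} for all i. -/
/-!
For fixed `y`, the map `d ↦ y + F d` with `F d i = ½ ∑_{j ≠ i} sgn_ε(d_j) φ̃_{ij}` is continuous
with bounded range, so it maps a large cube centred at `y` into itself, and a Brouwer fixed point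
`d = y + F d` is the required preimage of `y`.

Brouwer's theorem for the cube `[0,1]ⁿ` is proved combinatorially. Label a point `x` of the grid
`{0,…,p}ⁿ` by the least `i` with `x i < p` and `x i / p ≤ f (x / p) i`, or by `n` if there is none.
Some simplex of Kuhn's triangulation of the grid carries all labels `0,…,n`; for every `i` its
vertices witness both inequalities between `x i / p` and `f (x / p) i`, so its base point is an
approximate fixed point, and compactness gives a fixed point.

Fully labelled Kuhn simplices exist because their number is odd, by the rooms-and-doors argument
and induction on `n`. Call a pair (simplex, vertex `j`) a door if the other vertices carry the
labels `0,…,n-1`. A fully labelled simplex has one door and any other simplex an even number, so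
modulo 2 the doors count the fully labelled simplices. Crossing the facet opposite `j` into the
adjacent Kuhn simplex is an involution on doors; its fixed points are the facets lying in the face
`x_last = 0`, which are the fully labelled simplices of that face.
-/

open Finset Function Equiv

theorem Finset.cast_card_eq_card_fixed_of_involutive {α : Type*} [DecidableEq α]
    {t : Finset α} {f : α → α} (hf : ∀ a ∈ t, f a ∈ t) (hff : ∀ a ∈ t, f (f a) = a) :
    (#t : ZMod 2) = #{a ∈ t | f a = a} := by
  have hmoved : (#{a ∈ t | f a ≠ a} : ZMod 2) = 0 := by
    rw [natCast_card_filter]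
    refine sum_involution (fun a _ => f a) (fun a ha => ?_) (fun a _ h hfa => by simp [hfa] at h)
      hf hff
    by_cases h : f a = a
    · simp [h]
    · have h' : f (f a) ≠ f a := by rwa [hff a ha, ne_comm]
      rw [if_pos h, if_pos h']
      decide
  rw [← card_filter_add_card_filter_not (fun a => f a = a)]
  push_cast
  rw [hmoved, add_zero]

@[simp]
theorem Equiv.Perm.extendDomain_finSuccAboveEquiv_last_castSucc {m : ℕ} (σ : Perm (Fin m))
    (i : Fin m) :
    σ.extendDomain (finSuccAboveEquiv (Fin.last m)) i.castSucc = (σ i).castSucc := by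
  simpa only [finSuccAboveEquiv_apply, Fin.succAbove_last] using
    σ.extendDomain_apply_image (finSuccAboveEquiv (Fin.last m)) i

@[simp]
theorem Equiv.Perm.extendDomain_finSuccAboveEquiv_last_last {m : ℕ} (σ : Perm (Fin m)) :
    σ.extendDomain (finSuccAboveEquiv (Fin.last m)) (Fin.last m) = Fin.last m :=
  σ.extendDomain_apply_not_subtype _ (by simp)

namespace Kuhn

def IsFullyLabelled (n : ℕ) (c : ℕ → ℕ) : Prop := range (n + 1) ⊆ (range (n + 1)).image c

def IsDoor (n : ℕ) (c : ℕ → ℕ) (j : ℕ) : Prop := range n ⊆ ((range (n + 1)).erase j).image c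

instance (n : ℕ) (c : ℕ → ℕ) : Decidable (IsFullyLabelled n c) := by
  unfold IsFullyLabelled; infer_instance

instance (n : ℕ) (c : ℕ → ℕ) (j : ℕ) : Decidable (IsDoor n c j) := by
  unfold IsDoor; infer_instance

section LabelSequences

variable {n : ℕ} {c : ℕ → ℕ}

lemma IsDoor.image_erase_eq_and_injOn {j : ℕ} (hj : j ≤ n) (h : IsDoor n c j) :
    ((range (n + 1)).erase j).image c = range n ∧ Set.InjOn c ((range (n + 1)).erase j) := by
  have hcard : #((range (n + 1)).erase j) = n := by simp [card_erase_of_mem, Nat.lt_succ_of_le hj]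
  have himage := (eq_of_subset_of_card_le h (card_image_le.trans (by simp [hcard]))).symm
  exact ⟨himage, card_image_iff.mp (by rw [himage, hcard, card_range])⟩

lemma card_doors_of_isFullyLabelled (hc : ∀ j ≤ n, c j ≤ n) (hfull : IsFullyLabelled n c) :
    #{j ∈ range (n + 1) | IsDoor n c j} = 1 := by
  have himage : (range (n + 1)).image c = range (n + 1) :=
    (image_subset_iff.2 fun j hj => mem_range.2 (Nat.lt_succ_of_le
      (hc j (Nat.lt_succ_iff.1 (mem_range.1 hj))))).antisymm hfull
  have hinj : Set.InjOn c (range (n + 1)) := card_image_iff.mp (by rw [himage])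
  obtain ⟨j₀, hj₀, hcj₀⟩ := mem_image.1 (hfull (self_mem_range_succ n))
  rw [card_eq_one]
  refine ⟨j₀, eq_singleton_iff_unique_mem.2 ⟨mem_filter.2 ⟨hj₀, fun k hk => ?_⟩, ?_⟩⟩
  · have hk' : k < n := mem_range.1 hk
    obtain ⟨t, ht, htk⟩ := mem_image.1 (hfull (mem_range.2 (Nat.lt_succ_of_lt hk')))
    refine mem_image.2 ⟨t, mem_erase.2 ⟨?_, ht⟩, htk⟩
    rintro rfl
    omega
  · intro j hj
    obtain ⟨hjr, hdoor⟩ := mem_filter.1 hj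
    by_contra hne
    have hlt : c j < n := by
      refine lt_of_le_of_ne (hc j (Nat.lt_succ_iff.1 (mem_range.1 hjr))) fun h => hne ?_
      exact hinj hjr hj₀ (h.trans hcj₀.symm)
    obtain ⟨t, ht, hct⟩ := mem_image.1 (hdoor (mem_range.2 hlt))
    exact (mem_erase.1 ht).1 (hinj (mem_of_mem_erase ht) hjr hct)

lemma even_card_doors (hc : ∀ j ≤ n, c j ≤ n) (hfull : ¬ IsFullyLabelled n c) :
    Even #{j ∈ range (n + 1) | IsDoor n c j} := by
  by_cases hdoor : ∃ j₀ ≤ n, IsDoor n c j₀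
  swap
  · push Not at hdoor
    simp [filter_false_of_mem fun j hj => hdoor j (Nat.lt_succ_iff.1 (mem_range.1 hj))]
  obtain ⟨j₀, hj₀, hdoor₀⟩ := hdoor
  obtain ⟨himage, hinj⟩ := hdoor₀.image_erase_eq_and_injOn hj₀
  have hj₀r : j₀ ∈ range (n + 1) := mem_range.2 (Nat.lt_succ_of_le hj₀)
  have hcj₀ : c j₀ < n := by
    refine lt_of_le_of_ne (hc j₀ hj₀) fun h => hfull fun k hk => ?_
    rcases Nat.lt_succ_iff_lt_or_eq.1 (mem_range.1 hk) with hk | hk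
    · exact image_subset_image (erase_subset _ _) (himage ▸ mem_range.2 hk)
    · exact mem_image.2 ⟨j₀, hj₀r, h.trans hk.symm⟩
  -- the label of `j₀` occurs exactly once more, at `t₀`, and `j₀`, `t₀` are the only doors
  obtain ⟨t₀, ht₀, hct₀⟩ := mem_image.1 (himage ▸ mem_range.2 hcj₀)
  have ht₀j₀ : t₀ ≠ j₀ := (mem_erase.1 ht₀).1
  have hdoors : {j ∈ range (n + 1) | IsDoor n c j} = {j₀, t₀} := by
    ext j
    simp only [mem_filter, mem_insert, mem_singleton]
    constructor
    · rintro ⟨hjr, hdj⟩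
      by_contra! hne
      have hj : j ∈ (range (n + 1)).erase j₀ := mem_erase.2 ⟨hne.1, hjr⟩
      obtain ⟨t, ht, hct⟩ := mem_image.1 (hdj (himage ▸ mem_image_of_mem c hj))
      by_cases htj₀ : t = j₀
      · exact hne.2 (hinj hj ht₀ (by rw [← hct, htj₀, hct₀]))
      · exact (mem_erase.1 ht).1 (hinj (mem_erase.2 ⟨htj₀, mem_of_mem_erase ht⟩) hj hct)
    · rintro (rfl | rfl)
      · exact ⟨hj₀r, hdoor₀⟩
      · refine ⟨mem_of_mem_erase ht₀, fun k hk => ?_⟩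
        obtain ⟨t, ht, hct⟩ := mem_image.1 (himage ▸ hk)
        by_cases htj : t = j
        · exact mem_image.2 ⟨j₀, mem_erase.2 ⟨ht₀j₀.symm, hj₀r⟩, by rw [← hct, htj, hct₀]⟩
        · exact mem_image.2 ⟨t, mem_erase.2 ⟨htj, mem_of_mem_erase ht⟩, hct⟩
  rw [hdoors, card_pair ht₀j₀.symm]
  exact even_two

lemma isDoor_congr {c' : ℕ → ℕ} {j : ℕ} (h : ∀ t ≤ n, t ≠ j → c t = c' t) :
    IsDoor n c j ↔ IsDoor n c' j := by
  rw [IsDoor, IsDoor, image_congr fun t ht => ?_]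
  obtain ⟨htj, htn⟩ := mem_erase.1 ht
  exact h t (Nat.lt_succ_iff.1 (mem_range.1 htn)) htj

lemma isDoor_zero_iff : IsDoor n c 0 ↔ IsDoor n (fun u => c (u + 1)) n := by
  have : ((range (n + 1)).erase 0).image c =
      ((range (n + 1)).erase n).image (fun u => c (u + 1)) := by
    ext k
    simp only [mem_image, mem_erase, mem_range]
    constructor
    · rintro ⟨t, ⟨ht0, htn⟩, rfl⟩
      exact ⟨t - 1, ⟨by omega, by omega⟩, by rw [Nat.sub_add_cancel (Nat.pos_of_ne_zero ht0)]⟩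
    · rintro ⟨u, ⟨hun, hu⟩, rfl⟩
      exact ⟨u + 1, ⟨by omega, by omega⟩, rfl⟩
  rw [IsDoor, IsDoor, this]

lemma isDoor_last_iff : IsDoor (n + 1) c (n + 1) ↔ IsFullyLabelled n c := by
  rw [IsDoor, IsFullyLabelled, range_add_one (n := n + 1), erase_insert notMem_range_self]

end LabelSequences

/-- A simplex of Kuhn's triangulation of `ℕⁿ`, given by a base point `b` and an order `π` of the
coordinate directions; its vertices are `b, b + e (π 0), b + e (π 0) + e (π 1), …`. -/
abbrev Simplex (n : ℕ) := (Fin n → ℕ) × Perm (Fin n)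

namespace Simplex

variable {n m : ℕ}

def vertex (s : Simplex n) (j : ℕ) : Fin n → ℕ :=
  fun i => s.1 i + if (s.2⁻¹ i : ℕ) < j then 1 else 0

lemma dist_vertex_le (s : Simplex n) (j j' : ℕ) {P : ℝ} (hP : 0 < P) :
    dist (fun i => (s.vertex j i : ℝ) / P) (fun i => (s.vertex j' i : ℝ) / P) ≤ 1 / P := by
  refine (dist_pi_le_iff (by positivity)).2 fun i => ?_
  rw [Real.dist_eq, ← sub_div, abs_div, abs_of_pos hP]
  gcongr
  have h : ∀ j, (s.1 i : ℝ) ≤ s.vertex j i ∧ (s.vertex j i : ℝ) ≤ s.1 i + 1 := fun j => by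
    unfold vertex; split_ifs <;> simp
  rw [abs_le]
  constructor <;> linarith [h j, h j']

def rotateUp (s : Simplex (m + 1)) : Simplex (m + 1) :=
  (s.1 + Pi.single (s.2 0) 1, s.2 * finRotate (m + 1))

def rotateDown (s : Simplex (m + 1)) : Simplex (m + 1) :=
  (s.1 - Pi.single (s.2 (Fin.last m)) 1, s.2 * (finRotate (m + 1))⁻¹)

def swapAt (s : Simplex (m + 1)) (j : ℕ) : Simplex (m + 1) :=
  (s.1, s.2 * Equiv.swap (Fin.ofNat _ (j - 1)) (Fin.ofNat _ j))

lemma vertex_rotateUp (s : Simplex (m + 1)) {u : ℕ} (hu : u ≤ m) :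
    s.rotateUp.vertex u = s.vertex (u + 1) := by
  funext i
  obtain ⟨b, π⟩ := s
  simp only [vertex, rotateUp, mul_inv_rev, Perm.mul_apply, Pi.add_apply, Pi.single_apply]
  by_cases hi : π⁻¹ i = 0
  · obtain rfl : i = π 0 := Perm.inv_eq_iff_eq.1 hi
    simp [hu]
  · have : i ≠ π 0 := by rintro rfl; simp at hi
    rw [if_neg this, Perm.inv_def (finRotate _), coe_finRotate_symm_of_ne_zero hi]
    have := Fin.val_ne_zero_iff.2 hi
    split_ifs <;> omega

lemma rotateDown_rotateUp (s : Simplex (m + 1)) : s.rotateUp.rotateDown = s := by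
  simp [rotateDown, rotateUp]

lemma rotateUp_rotateDown (s : Simplex (m + 1)) (h : s.1 (s.2 (Fin.last m)) ≠ 0) :
    s.rotateDown.rotateUp = s := by
  obtain ⟨b, π⟩ := s
  simp only [rotateUp, rotateDown, Perm.mul_apply, Prod.mk.injEq, inv_mul_cancel_right, and_true]
  have hlast : (finRotate (m + 1))⁻¹ 0 = Fin.last m := Perm.inv_eq_iff_eq.2 finRotate_last.symm
  funext i
  simp only [hlast, Pi.add_apply, Pi.sub_apply, Pi.single_apply]
  split_ifs with hi
  · subst hi
    exact Nat.sub_add_cancel (Nat.one_le_iff_ne_zero.2 h)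
  · simp

lemma vertex_rotateDown (s : Simplex (m + 1)) (h : s.1 (s.2 (Fin.last m)) ≠ 0) {u : ℕ}
    (hu : u ≤ m) : s.rotateDown.vertex (u + 1) = s.vertex u := by
  rw [← vertex_rotateUp _ hu, rotateUp_rotateDown s h]

lemma vertex_swapAt (s : Simplex (m + 1)) {j t : ℕ} (hj0 : 0 < j) (hjm : j ≤ m) (ht : t ≠ j) :
    (s.swapAt j).vertex t = s.vertex t := by
  funext i
  obtain ⟨b, π⟩ := s
  simp only [vertex, swapAt, mul_inv_rev, swap_inv, Perm.mul_apply]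
  have hval : ∀ k ≤ m, (Fin.ofNat (m + 1) k : ℕ) = k := fun k hk => by
    rw [Fin.val_ofNat, Nat.mod_eq_of_lt (Nat.lt_succ_of_le hk)]
  rcases eq_or_ne (π⁻¹ i) (Fin.ofNat _ (j - 1)) with h | h₁
  · rw [h, swap_apply_left, hval _ hjm, hval _ (by omega)]
    split_ifs <;> omega
  rcases eq_or_ne (π⁻¹ i) (Fin.ofNat _ j) with h | h₂
  · rw [h, swap_apply_right, hval _ hjm, hval _ (by omega)]
    split_ifs <;> omega
  rw [swap_apply_of_ne_of_ne h₁ h₂]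

lemma swapAt_swapAt (s : Simplex (m + 1)) (j : ℕ) : (s.swapAt j).swapAt j = s := by
  simp [swapAt, mul_assoc, swap_mul_self]

lemma swapAt_ne (s : Simplex (m + 1)) {j : ℕ} (hj0 : 0 < j) (hjm : j ≤ m) : s.swapAt j ≠ s := by
  intro h
  have := congrArg Fin.val (swap_eq_one_iff.1 (mul_eq_left.1 (congrArg Prod.snd h)))
  rw [Fin.val_ofNat, Fin.val_ofNat, Nat.mod_eq_of_lt (by omega), Nat.mod_eq_of_lt (by omega)]
    at this
  omega

def liftFace (s : Simplex m) : Simplex (m + 1) :=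
  (Fin.snoc s.1 0, s.2.extendDomain (finSuccAboveEquiv (Fin.last m)))

lemma vertex_liftFace (s : Simplex m) {t : ℕ} (ht : t ≤ m) :
    s.liftFace.vertex t = Fin.snoc (s.vertex t) 0 := by
  funext x
  induction x using Fin.lastCases with
  | last => simp [vertex, liftFace, ht.not_gt]
  | cast i => simp [vertex, liftFace]

lemma liftFace_injective : Injective (liftFace (m := m)) := by
  rintro ⟨b, σ⟩ ⟨b', σ'⟩ h
  simp only [liftFace, Prod.mk.injEq] at h
  exact Prod.ext (Fin.snoc_injective2 h.1).1 (Perm.extendDomainHom_injective _ h.2)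

lemma exists_liftFace_eq {s : Simplex (m + 1)} (hb : s.1 (Fin.last m) = 0)
    (hπ : s.2 (Fin.last m) = Fin.last m) : ∃ s' : Simplex m, s'.liftFace = s := by
  obtain ⟨b, π⟩ := s
  have hp : ∀ x, π x ≠ Fin.last m ↔ x ≠ Fin.last m := fun x => by
    rw [not_iff_not, ← hπ, π.injective.eq_iff, hπ]
  refine ⟨(Fin.init b, (finSuccAboveEquiv (Fin.last m)).symm.permCongr (π.subtypePerm hp)),
    Prod.ext ?_ ?_⟩
  · simp [liftFace, ← hb]
  ext x
  induction x using Fin.lastCases with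
  | last => simp [liftFace, hπ]
  | cast i =>
    simp [liftFace, permCongr_apply, finSuccAboveEquiv_symm_apply_last,
      finSuccAboveEquiv_apply]

end Simplex

open Simplex

variable {n m p : ℕ}

def simplices (n p : ℕ) : Finset (Simplex n) :=
  Fintype.piFinset (fun _ => range p) ×ˢ univ

lemma mem_simplices {s : Simplex n} : s ∈ simplices n p ↔ ∀ i, s.1 i < p := by
  simp [simplices]

lemma Simplex.vertex_le {s : Simplex n} (hs : s ∈ simplices n p) (j : ℕ) (i : Fin n) :
    s.vertex j i ≤ p := by
  have := mem_simplices.1 hs i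
  unfold vertex; split_ifs <;> omega

lemma rotateUp_mem_simplices {s : Simplex (m + 1)} (hs : s ∈ simplices (m + 1) p)
    (h : s.1 (s.2 0) + 1 < p) : s.rotateUp ∈ simplices (m + 1) p := by
  rw [mem_simplices] at hs ⊢
  intro i
  rcases eq_or_ne i (s.2 0) with rfl | hi
  · simpa [rotateUp] using h
  · simpa [rotateUp, Pi.single_apply, hi] using hs i

lemma rotateDown_mem_simplices {s : Simplex (m + 1)} (hs : s ∈ simplices (m + 1) p) :
    s.rotateDown ∈ simplices (m + 1) p :=
  mem_simplices.2 fun i => (Nat.sub_le _ _).trans_lt (mem_simplices.1 hs i)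

lemma swapAt_mem_simplices {s : Simplex (m + 1)} (hs : s ∈ simplices (m + 1) p) (j : ℕ) :
    s.swapAt j ∈ simplices (m + 1) p := by
  rw [mem_simplices] at hs ⊢
  exact hs

lemma liftFace_mem_simplices_iff (hp : 0 < p) {s : Simplex m} :
    s.liftFace ∈ simplices (m + 1) p ↔ s ∈ simplices m p := by
  simp [mem_simplices, liftFace, Fin.forall_fin_succ', hp]

structure IsLabelling (n p : ℕ) (L : (Fin n → ℕ) → ℕ) : Prop where
  le_dim : ∀ x : Fin n → ℕ, (∀ i, x i ≤ p) → L x ≤ n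
  le_of_eq_zero : ∀ x : Fin n → ℕ, (∀ i, x i ≤ p) → ∀ i, x i = 0 → L x ≤ i
  ne_of_eq_top : ∀ x : Fin n → ℕ, (∀ i, x i ≤ p) → ∀ i, x i = p → L x ≠ i

def doors (n p : ℕ) (L : (Fin n → ℕ) → ℕ) : Finset (Simplex n × ℕ) :=
  {e ∈ simplices n p ×ˢ range (n + 1) | IsDoor n (L ∘ e.1.vertex) e.2}

lemma le_of_mem_doors {L : (Fin n → ℕ) → ℕ} {e : Simplex n × ℕ} (he : e ∈ doors n p L) :
    e.2 ≤ n :=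
  Nat.lt_succ_iff.1 (mem_range.1 (mem_product.1 (mem_filter.1 he).1).2)

lemma IsLabelling.cast_card_doors {L : (Fin n → ℕ) → ℕ} (hL : IsLabelling n p L) :
    (#(doors n p L) : ZMod 2) = #{s ∈ simplices n p | IsFullyLabelled n (L ∘ s.vertex)} := by
  rw [doors, natCast_card_filter, natCast_card_filter, sum_product]
  refine sum_congr rfl fun s hs => ?_
  have hc : ∀ j ≤ n, (L ∘ s.vertex) j ≤ n := fun j _ => hL.le_dim _ (vertex_le hs j)
  rw [← natCast_card_filter]
  split_ifs with hfull
  · rw [card_doors_of_isFullyLabelled hc hfull, Nat.cast_one]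
  · exact (even_card_doors hc hfull).natCast_zmod_two

/-- The simplex adjacent to `s` across the facet opposite its vertex `j`, together with the index
of its vertex opposite that facet. A facet in the face `x (Fin.last m) = 0` has no neighbour in
the grid; it stays fixed. -/
def pivot (e : Simplex (m + 1) × ℕ) : Simplex (m + 1) × ℕ :=
  if e.2 = 0 then (e.1.rotateUp, m + 1)
  else if e.2 ≤ m then (e.1.swapAt e.2, e.2)
  else if e.1.1 (e.1.2 (Fin.last m)) = 0 then e
  else (e.1.rotateDown, 0)

lemma pivot_zero (s : Simplex (m + 1)) : pivot (s, 0) = (s.rotateUp, m + 1) := if_pos rfl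

lemma pivot_of_pos_of_le (s : Simplex (m + 1)) {j : ℕ} (hj0 : 0 < j) (hjm : j ≤ m) :
    pivot (s, j) = (s.swapAt j, j) := by
  simp [pivot, hj0.ne', hjm]

lemma pivot_last_of_eq_zero {s : Simplex (m + 1)} (hz : s.1 (s.2 (Fin.last m)) = 0) :
    pivot (s, m + 1) = (s, m + 1) := by
  simp [pivot, hz]

lemma pivot_last_of_ne_zero {s : Simplex (m + 1)} (hz : s.1 (s.2 (Fin.last m)) ≠ 0) :
    pivot (s, m + 1) = (s.rotateDown, 0) := by
  simp [pivot, hz]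

lemma pivot_pivot {e : Simplex (m + 1) × ℕ} (he : e.2 ≤ m + 1) : pivot (pivot e) = e := by
  obtain ⟨s, j⟩ := e
  rcases Nat.eq_zero_or_pos j with rfl | hj0
  · have hup : s.rotateUp.1 (s.rotateUp.2 (Fin.last m)) ≠ 0 := by simp [rotateUp]
    rw [pivot_zero, pivot_last_of_ne_zero hup, rotateDown_rotateUp]
  rcases Nat.lt_succ_iff_lt_or_eq.1 (Nat.lt_succ_iff.2 he) with hjm | rfl
  · have hjm : j ≤ m := Nat.lt_succ_iff.1 hjm
    rw [pivot_of_pos_of_le s hj0 hjm, pivot_of_pos_of_le _ hj0 hjm, swapAt_swapAt]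
  by_cases hz : s.1 (s.2 (Fin.last m)) = 0
  · rw [pivot_last_of_eq_zero hz, pivot_last_of_eq_zero hz]
  · rw [pivot_last_of_ne_zero hz, pivot_zero, rotateUp_rotateDown s hz]

lemma pivot_eq_self_iff {e : Simplex (m + 1) × ℕ} (he : e.2 ≤ m + 1) :
    pivot e = e ↔ e.2 = m + 1 ∧ e.1.1 (e.1.2 (Fin.last m)) = 0 := by
  obtain ⟨s, j⟩ := e
  rcases Nat.eq_zero_or_pos j with rfl | hj0
  · simp [pivot_zero]
  rcases Nat.lt_succ_iff_lt_or_eq.1 (Nat.lt_succ_iff.2 he) with hjm | rfl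
  · have hjm : j ≤ m := Nat.lt_succ_iff.1 hjm
    simp [pivot_of_pos_of_le s hj0 hjm, swapAt_ne s hj0 hjm]
    omega
  by_cases hz : s.1 (s.2 (Fin.last m)) = 0
  · simp [pivot_last_of_eq_zero hz, hz]
  · simp [pivot_last_of_ne_zero hz, hz]

namespace IsLabelling

variable {L : (Fin (m + 1) → ℕ) → ℕ} (hL : IsLabelling (m + 1) p L)
include hL

lemma succ_base_lt_of_isDoor_zero {s : Simplex (m + 1)} (hs : s ∈ simplices (m + 1) p)
    (h : IsDoor (m + 1) (L ∘ s.vertex) 0) : s.1 (s.2 0) + 1 < p := by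
  by_contra hge
  have hp : s.1 (s.2 0) + 1 = p := by have := mem_simplices.1 hs (s.2 0); omega
  obtain ⟨t, ht, hLt⟩ := mem_image.1 (h (mem_range.2 (s.2 0).isLt))
  have htop : s.vertex t (s.2 0) = p := by
    simp only [vertex, Perm.inv_eq_iff_eq.2 rfl, Fin.val_zero]
    rw [if_pos (Nat.pos_of_ne_zero (mem_erase.1 ht).1), hp]
  exact hL.ne_of_eq_top _ (vertex_le hs t) _ htop (by simpa using hLt)

lemma perm_last_of_isDoor_last {s : Simplex (m + 1)} (hs : s ∈ simplices (m + 1) p)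
    (h : IsDoor (m + 1) (L ∘ s.vertex) (m + 1)) (hz : s.1 (s.2 (Fin.last m)) = 0) :
    s.2 (Fin.last m) = Fin.last m := by
  obtain ⟨t, ht, hLt⟩ := mem_image.1 (h (mem_range.2 (Nat.lt_succ_self m)))
  have htm : t ≤ m := by have := mem_erase.1 ht; simp at this; omega
  have hzero : s.vertex t (s.2 (Fin.last m)) = 0 := by
    simp only [vertex, Perm.inv_eq_iff_eq.2 rfl, Fin.val_last, hz]
    rw [if_neg (by omega)]
  have := hL.le_of_eq_zero _ (vertex_le hs t) _ hzero
  simp only [comp_apply] at hLt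
  rw [hLt] at this
  exact Fin.ext (le_antisymm (Nat.lt_succ_iff.1 (s.2 _).isLt) this)

lemma pivot_mem_doors {e : Simplex (m + 1) × ℕ} (he : e ∈ doors (m + 1) p L) :
    pivot e ∈ doors (m + 1) p L := by
  obtain ⟨s, j⟩ := e
  simp only [doors, mem_filter, mem_product, mem_range] at he ⊢
  obtain ⟨⟨hs, hj⟩, hdoor⟩ := he
  rcases Nat.eq_zero_or_pos j with rfl | hj0
  · rw [pivot_zero]
    refine ⟨⟨rotateUp_mem_simplices hs (hL.succ_base_lt_of_isDoor_zero hs hdoor), by omega⟩,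
      (isDoor_congr fun t ht _ => ?_).2 (isDoor_zero_iff.1 hdoor)⟩
    simp only [comp_apply, vertex_rotateUp s (show t ≤ m by omega)]
  rcases Nat.lt_succ_iff_lt_or_eq.1 hj with hjm | rfl
  · rw [pivot_of_pos_of_le s hj0 (Nat.lt_succ_iff.1 hjm)]
    refine ⟨⟨swapAt_mem_simplices hs j, hj⟩, (isDoor_congr fun t _ htj => ?_).2 hdoor⟩
    simp only [comp_apply, vertex_swapAt s hj0 (Nat.lt_succ_iff.1 hjm) htj]
  by_cases hz : s.1 (s.2 (Fin.last m)) = 0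
  · rw [pivot_last_of_eq_zero hz]
    exact ⟨⟨hs, hj⟩, hdoor⟩
  rw [pivot_last_of_ne_zero hz]
  refine ⟨⟨rotateDown_mem_simplices hs, by omega⟩,
    isDoor_zero_iff.2 ((isDoor_congr fun u hu _ => ?_).2 hdoor)⟩
  simp only [comp_apply, vertex_rotateDown s hz (show u ≤ m by omega)]

end IsLabelling

def faceLabelling (L : (Fin (m + 1) → ℕ) → ℕ) (x : Fin m → ℕ) : ℕ := L (Fin.snoc x 0)

lemma IsLabelling.face {L : (Fin (m + 1) → ℕ) → ℕ} (hL : IsLabelling (m + 1) p L) :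
    IsLabelling m p (faceLabelling L) := by
  have hgrid : ∀ x : Fin m → ℕ, (∀ i, x i ≤ p) → ∀ i, (Fin.snoc x 0 : Fin (m + 1) → ℕ) i ≤ p :=
    fun x hx => Fin.lastCases (by simp) (by simpa using hx)
  refine ⟨fun x hx => ?_, fun x hx i hi => ?_, fun x hx i hi => ?_⟩
  · simpa [faceLabelling] using hL.le_of_eq_zero _ (hgrid x hx) (Fin.last m) (by simp)
  · simpa [faceLabelling] using hL.le_of_eq_zero _ (hgrid x hx) i.castSucc (by simpa)
  · simpa [faceLabelling] using hL.ne_of_eq_top _ (hgrid x hx) i.castSucc (by simpa)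

lemma isDoor_liftFace_iff {L : (Fin (m + 1) → ℕ) → ℕ} {s : Simplex m} :
    IsDoor (m + 1) (L ∘ s.liftFace.vertex) (m + 1) ↔
      IsFullyLabelled m (faceLabelling L ∘ s.vertex) := by
  rw [← isDoor_last_iff]
  refine isDoor_congr fun t ht htm => ?_
  simp [faceLabelling, vertex_liftFace s (show t ≤ m by omega)]

lemma IsLabelling.card_fixed_doors {L : (Fin (m + 1) → ℕ) → ℕ} (hL : IsLabelling (m + 1) p L)
    (hp : 0 < p) :
    #{e ∈ doors (m + 1) p L | pivot e = e} =
      #{s ∈ simplices m p | IsFullyLabelled m (faceLabelling L ∘ s.vertex)} := by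
  symm
  refine card_bij (fun s _ => (s.liftFace, m + 1)) (fun s hs => ?_)
    (fun s _ s' _ h => liftFace_injective (Prod.ext_iff.1 h).1) (fun e he => ?_)
  · obtain ⟨hs, hfull⟩ := mem_filter.1 hs
    have hz : s.liftFace.1 (s.liftFace.2 (Fin.last m)) = 0 := by
      simp [liftFace]
    simp only [doors, mem_filter, mem_product, mem_range]
    exact ⟨⟨⟨(liftFace_mem_simplices_iff hp).2 hs, by omega⟩, isDoor_liftFace_iff.2 hfull⟩,
      pivot_last_of_eq_zero hz⟩
  · obtain ⟨s, j⟩ := e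
    simp only [doors, mem_filter, mem_product, mem_range] at he
    obtain ⟨⟨⟨hs, hj⟩, hdoor⟩, hfix⟩ := he
    obtain ⟨rfl, hz⟩ := (pivot_eq_self_iff (Nat.lt_succ_iff.1 hj)).1 hfix
    have hπ := hL.perm_last_of_isDoor_last hs hdoor hz
    obtain ⟨s', rfl⟩ := exists_liftFace_eq (hπ ▸ hz) hπ
    exact ⟨s', mem_filter.2 ⟨(liftFace_mem_simplices_iff hp).1 hs, isDoor_liftFace_iff.1 hdoor⟩,
      rfl⟩

theorem IsLabelling.odd_card_fullyLabelled (hp : 0 < p) :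
    ∀ {n : ℕ} {L : (Fin n → ℕ) → ℕ}, IsLabelling n p L →
      Odd #{s ∈ simplices n p | IsFullyLabelled n (L ∘ s.vertex)}
  | 0, L, hL => by
    have hfull : ∀ s ∈ simplices 0 p, IsFullyLabelled 0 (L ∘ s.vertex) := fun s hs => by
      have := hL.le_dim _ (vertex_le hs 0)
      simp_all [IsFullyLabelled]
    rw [filter_true_of_mem hfull]
    simp [simplices]
  | m + 1, L, hL => by
    rw [← ZMod.natCast_eq_one_iff_odd, ← hL.cast_card_doors,
      cast_card_eq_card_fixed_of_involutive (fun e he => hL.pivot_mem_doors he)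
        (fun e he => pivot_pivot (le_of_mem_doors he)),
      hL.card_fixed_doors hp, ZMod.natCast_eq_one_iff_odd]
    exact hL.face.odd_card_fullyLabelled hp

section LeastLabel

variable (Q : (Fin n → ℕ) → Fin n → Prop) [∀ x i, Decidable (Q x i)]

def leastLabel (x : Fin n → ℕ) : ℕ :=
  Nat.find (p := fun k => k = n ∨ ∃ h : k < n, Q x ⟨k, h⟩) ⟨n, Or.inl rfl⟩

variable {Q}

lemma leastLabel_le (x : Fin n → ℕ) : leastLabel Q x ≤ n :=
  Nat.find_min' _ (Or.inl rfl)

lemma leastLabel_le_of {x : Fin n → ℕ} {i : Fin n} (h : Q x i) : leastLabel Q x ≤ i :=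
  Nat.find_min' _ (Or.inr ⟨i.isLt, h⟩)

lemma of_leastLabel_eq {x : Fin n → ℕ} {i : Fin n} (h : leastLabel Q x = i) : Q x i := by
  have hspec : leastLabel Q x = n ∨ ∃ h : leastLabel Q x < n, Q x ⟨leastLabel Q x, h⟩ :=
    Nat.find_spec (p := fun k => k = n ∨ ∃ h : k < n, Q x ⟨k, h⟩) ⟨n, Or.inl rfl⟩
  obtain hn | ⟨_, hQ⟩ := hspec
  · have := i.isLt; omega
  · rwa [show (⟨leastLabel Q x, _⟩ : Fin n) = i from Fin.ext h] at hQ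

lemma not_of_leastLabel_eq_dim {x : Fin n → ℕ} (h : leastLabel Q x = n) (i : Fin n) : ¬ Q x i :=
  fun hQ => by have := leastLabel_le_of hQ; have := i.isLt; omega

end LeastLabel

theorem exists_simplex_forall_exists_vertex (hp : 0 < p)
    (Q : (Fin n → ℕ) → Fin n → Prop) [∀ x i, Decidable (Q x i)]
    (hzero : ∀ x : Fin n → ℕ, (∀ i, x i ≤ p) → ∀ i, x i = 0 → Q x i)
    (htop : ∀ x : Fin n → ℕ, (∀ i, x i ≤ p) → ∀ i, x i = p → ¬ Q x i) :
    ∃ s ∈ simplices n p, ∀ i, (∃ j, Q (s.vertex j) i) ∧ ∃ j, ¬ Q (s.vertex j) i := by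
  have hL : IsLabelling n p (leastLabel Q) :=
    ⟨fun x _ => leastLabel_le x, fun x hx i hi => leastLabel_le_of (hzero x hx i hi),
      fun x hx i hi h => htop x hx i hi (of_leastLabel_eq h)⟩
  obtain ⟨s, hs⟩ := card_pos.1 (hL.odd_card_fullyLabelled hp).pos
  obtain ⟨hs, hfull⟩ := mem_filter.1 hs
  refine ⟨s, hs, fun i => ⟨?_, ?_⟩⟩
  · obtain ⟨j, -, hj⟩ := mem_image.1 (hfull (mem_range.2 (Nat.lt_succ_of_lt i.isLt)))
    exact ⟨j, of_leastLabel_eq hj⟩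
  · obtain ⟨j, -, hj⟩ := mem_image.1 (hfull (self_mem_range_succ n))
    exact ⟨j, not_of_leastLabel_eq_dim hj i⟩

end Kuhn

theorem exists_dist_le_of_mapsTo_unitCube {n : ℕ} {f : (Fin n → ℝ) → Fin n → ℝ}
    (hf : ContinuousOn f (Set.Icc 0 1)) (hmaps : Set.MapsTo f (Set.Icc 0 1) (Set.Icc 0 1))
    {δ : ℝ} (hδ : 0 < δ) : ∃ z ∈ Set.Icc 0 1, dist (f z) z ≤ δ := by
  obtain ⟨η, hη, hfη⟩ := Metric.uniformContinuousOn_iff.1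
    (isCompact_Icc.uniformContinuousOn_of_continuous hf) (δ / 2) (half_pos hδ)
  obtain ⟨P, hP0, hP⟩ : ∃ P : ℕ, 0 < P ∧ 1 / (P : ℝ) < min η (δ / 2) := by
    obtain ⟨p, hp⟩ := exists_nat_one_div_lt (lt_min hη (half_pos hδ))
    exact ⟨p + 1, p.succ_pos, by exact_mod_cast hp⟩
  have hPR : (0 : ℝ) < P := by exact_mod_cast hP0
  set g : (Fin n → ℕ) → Fin n → ℝ := fun x i => (x i : ℝ) / P
  have hg : ∀ x : Fin n → ℕ, (∀ i, x i ≤ P) → g x ∈ Set.Icc 0 1 := fun x hx =>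
    ⟨fun i => by positivity, fun i => (div_le_one hPR).2 (by exact_mod_cast hx i)⟩
  classical
  obtain ⟨s, hs, hQ⟩ := Kuhn.exists_simplex_forall_exists_vertex hP0
    (fun x i => x i < P ∧ g x i ≤ f (g x) i)
    (fun x hx i hi => ⟨by omega, by simpa [g, hi] using (hmaps (hg x hx)).1 i⟩)
    (fun x _ i hi h => h.1.ne hi)
  have hv : ∀ j, g (s.vertex j) ∈ Set.Icc 0 1 := fun j => hg _ (Kuhn.Simplex.vertex_le hs j)
  have hclose : ∀ j j', dist (g (s.vertex j)) (g (s.vertex j')) ≤ 1 / P :=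
    fun j j' => s.dist_vertex_le j j' hPR
  have hfclose : ∀ j j', dist (f (g (s.vertex j))) (f (g (s.vertex j'))) < δ / 2 :=
    fun j j' => hfη _ (hv j) _ (hv j') ((hclose j j').trans_lt (hP.trans_le (min_le_left _ _)))
  refine ⟨g (s.vertex 0), hv 0, (dist_pi_le_iff hδ.le).2 fun i => ?_⟩
  have hcoord : ∀ a b : Fin n → ℝ, |a i - b i| ≤ dist a b := fun a b => by
    simpa [Real.dist_eq] using dist_le_pi_dist a b i
  have hPδ : 1 / (P : ℝ) ≤ δ / 2 := (hP.trans_le (min_le_right _ _)).le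
  obtain ⟨⟨w, -, hw⟩, u, hu⟩ := hQ i
  have hw₁ := abs_le.1 ((hcoord _ _).trans (hclose 0 w))
  have hw₂ := abs_le.1 ((hcoord _ _).trans (hfclose 0 w).le)
  have hu₁ := abs_le.1 ((hcoord _ _).trans (hclose 0 u))
  have hupper : f (g (s.vertex 0)) i ≤ g (s.vertex u) i + δ / 2 := by
    by_cases hlt : s.vertex u i < P
    · have hu₂ := abs_le.1 ((hcoord _ _).trans (hfclose 0 u).le)
      linarith [not_le.1 (not_and.1 hu hlt)]
    · have hgu : g (s.vertex u) i = 1 := by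
        simp [g, le_antisymm (Kuhn.Simplex.vertex_le hs u i) (not_lt.1 hlt), hPR.ne']
      have hf1 : f (g (s.vertex 0)) i ≤ 1 := (hmaps (hv 0)).2 i
      linarith
  rw [Real.dist_eq, abs_le]
  constructor <;> linarith

def HasFixedPointProperty {X : Type*} [TopologicalSpace X] (s : Set X) : Prop :=
  ∀ f : X → X, ContinuousOn f s → Set.MapsTo f s s → ∃ x ∈ s, f x = x

theorem hasFixedPointProperty_unitCube (n : ℕ) :
    HasFixedPointProperty (Set.Icc (0 : Fin n → ℝ) 1) := by
  intro f hf hmaps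
  obtain ⟨z, hz, hmin⟩ := isCompact_Icc.exists_isMinOn (Set.nonempty_Icc.2 zero_le_one)
    (continuous_dist.comp_continuousOn (hf.prodMk continuousOn_id))
  refine ⟨z, hz, by_contra fun hne => ?_⟩
  obtain ⟨z', hz', hdist⟩ :=
    exists_dist_le_of_mapsTo_unitCube hf hmaps (half_pos (dist_pos.2 hne))
  linarith [show dist (f z) z ≤ dist (f z') z' from hmin hz', dist_pos.2 hne]

theorem HasFixedPointProperty.of_retraction {X Y : Type*} [TopologicalSpace X]
    [TopologicalSpace Y] {s : Set X} {t : Set Y} (hs : HasFixedPointProperty s) {φ : X → Y}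
    {ψ : Y → X} (hφ : ContinuousOn φ s) (hψ : ContinuousOn ψ t) (hφs : Set.MapsTo φ s t)
    (hψt : Set.MapsTo ψ t s) (hφψ : ∀ y ∈ t, φ (ψ y) = y) : HasFixedPointProperty t := by
  intro f hf hft
  obtain ⟨x, hx, hfix⟩ := hs (ψ ∘ f ∘ φ) (hψ.comp (hf.comp hφ hφs) (hft.comp hφs))
    (hψt.comp (hft.comp hφs))
  refine ⟨φ x, hφs hx, ?_⟩
  rw [← hφψ _ (hft (hφs hx))]
  exact congrArg φ hfix

theorem hasFixedPointProperty_Icc {n : ℕ} {a b : Fin n → ℝ} (hab : a ≤ b) :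
    HasFixedPointProperty (Set.Icc a b) := by
  refine (hasFixedPointProperty_unitCube n).of_retraction (φ := fun z => a + (b - a) * z)
    (ψ := fun y => (y - a) / (b - a)) (by fun_prop) (by fun_prop) ?_ ?_ ?_
  · intro z hz
    have hz₀ : ∀ i, 0 ≤ z i := hz.1
    have hz₁ : ∀ i, z i ≤ 1 := hz.2
    refine ⟨fun i => ?_, fun i => ?_⟩ <;> simp only [Pi.add_apply, Pi.mul_apply, Pi.sub_apply]
    · nlinarith [mul_nonneg (sub_nonneg.2 (hab i)) (hz₀ i)]
    · nlinarith [mul_le_mul_of_nonneg_left (hz₁ i) (sub_nonneg.2 (hab i))]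
  · intro y hy
    refine ⟨fun i => div_nonneg (sub_nonneg.2 (hy.1 i)) (sub_nonneg.2 (hab i)), fun i => ?_⟩
    exact div_le_one_of_le₀ (sub_le_sub_right (hy.2 i) _) (sub_nonneg.2 (hab i))
  · intro y hy
    funext i
    simp only [Pi.add_apply, Pi.mul_apply, Pi.sub_apply, Pi.div_apply]
    -- in a degenerate coordinate `a i = b i` the division gives `0`, and then `y i = a i`
    rcases eq_or_ne (b i - a i) 0 with h | h
    · rw [h, zero_mul, add_zero]
      linarith [hy.1 i, hy.2 i]
    · rw [mul_div_cancel₀ _ h, add_sub_cancel]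

theorem surjective_sub_of_isBounded_range {n : ℕ} {F : (Fin n → ℝ) → Fin n → ℝ}
    (hF : Continuous F) (hbdd : Bornology.IsBounded (Set.range F)) :
    Surjective fun x => x - F x := by
  intro y
  obtain ⟨C, hC⟩ := isBounded_iff_forall_norm_le.1 hbdd
  have hFC : ∀ x i, |F x i| ≤ C := fun x i =>
    (Real.norm_eq_abs _ ▸ norm_le_pi_norm (F x) i).trans (hC _ ⟨x, rfl⟩)
  have hC₀ : 0 ≤ C := (norm_nonneg _).trans (hC _ ⟨0, rfl⟩)
  obtain ⟨x, -, hx⟩ := hasFixedPointProperty_Icc (a := y - fun _ => C) (b := y + fun _ => C)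
    (fun i => by simp only [Pi.sub_apply, Pi.add_apply]; linarith) (fun x => y + F x)
    (continuous_const.add hF).continuousOn fun x _ =>
      ⟨fun i => by simp only [Pi.sub_apply, Pi.add_apply]; linarith [abs_le.1 (hFC x i)],
        fun i => by simp only [Pi.add_apply]; linarith [abs_le.1 (hFC x i)]⟩
  exact ⟨x, (eq_sub_of_add_eq hx).symm⟩

theorem contraction_map_surjective_general (N : ℕ)
    (y : Fin N → ℝ) (φ : Fin N → Fin N → ℝ)
    (sgnε : ℝ → ℝ) (hcont : Continuous sgnε)
    (hbd : ∀ d, |sgnε d| ≤ 1) :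
    ∃ d : Fin N → ℝ, ∀ i,
      y i = d i - (1 / 2) * ∑ j ∈ Finset.univ.erase i, sgnε (d j) * φ i j := by
  set G : (Fin N → ℝ) → Fin N → ℝ := fun σ i => (1 / 2) * ∑ j ∈ univ.erase i, σ j * φ i j
  have hG : Continuous G := by fun_prop
  have hrange : Set.range (fun d : Fin N → ℝ => G (sgnε ∘ d)) ⊆ G '' Set.Icc (-1) 1 := by
    rintro _ ⟨d, rfl⟩
    exact ⟨sgnε ∘ d, ⟨fun j => (abs_le.1 (hbd (d j))).1, fun j => (abs_le.1 (hbd (d j))).2⟩, rfl⟩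
  obtain ⟨d, hd⟩ := surjective_sub_of_isBounded_range (hG.comp (by fun_prop))
    ((isCompact_Icc.image hG).isBounded.subset hrange) y
  exact ⟨d, fun i => (congrFun hd i).symm⟩

/-- Surjectivity of the contraction map: for any impact parameters `y`, shifts
`φ̃_{ij}`, and any continuous bounded regularisation `sgn_ε` of the sign function,
there exist displacements `d` with
`y_i = d_i − (1/2) ∑_{j≠i} sgn_ε(d_j) φ̃_{ij}` for all `i`. -/
theorem contraction_map_surjective (N : ℕ) (ε : ℝ) (hε : 0 < ε)
    (y : Fin N → ℝ) (φ : Fin N → Fin N → ℝ)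
    (sgnε : ℝ → ℝ) (hcont : Continuous sgnε)
    (hbd : ∀ d, |sgnε d| ≤ 1)
    (hsgn : ∀ d : ℝ, ε ≤ |d| → sgnε d = if 0 ≤ d then 1 else -1) :
    ∃ d : Fin N → ℝ, ∀ i,
      y i = d i - (1 / 2) * ∑ j ∈ Finset.univ.erase i, sgnε (d j) * φ i j :=
  contraction_map_surjective_general N y φ sgnε hcont hbd
end

section
/- Let N ∈ ℕ, ε > 0, and let φ_{ij} < 0 for all i ≠ j. Let sgn_ε : ℝ → ℝ satisfy |sgn_ε| ≤ 1 everywhere and sgn_ε(d) = sign(d) for |d| ≥ ε. Suppose z ∈ ℝ^N and a subset s ⊆ {1,...,N} satisfy z_i ≤ (1/2)∑_{j≠i} φ_{ij} − ε for all i ∈ s, and z_i ≥ −(1/2)∑_{j≠i} φ_{ij} + ε for all i ∉ s. Then there is exactly one d ∈ ℝ^N solving z_i = d_i − (1/2)∑_{j≠i} sgn_ε(d_j) φ_{ij} for all i, and it satisfies d_i ≤ −ε for i ∈ s, d_i ≥ ε for i ∉ s, and d_i = z_i − (1/2)∑_{j≠i} sgn_s(j) φ_{ij}, where sgn_s(j)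 = 1 if j ∈ s and −1 otherwise. -/
open Finset

/-- Unique solvability of the displacement equations when the data is separated
by the set `s`: there is exactly one solution `d` of
`z_i = d_i − ½ ∑_{j≠i} sgn_ε(d_j) φ_{ij}`, it satisfies `d_i ≤ −ε` on `s`,
`d_i ≥ ε` off `s`, and it is given explicitly by
`d_i = z_i − ½ ∑_{j≠i} sgn_s(j) φ_{ij}`. -/
theorem displacement_unique_solution (N : ℕ) (ε : ℝ) (hε : 0 < ε)
    (φ : Fin N → Fin N → ℝ) (hφ : ∀ i j, i ≠ j → φ i j < 0)
    (sgnε : ℝ → ℝ) (hbd : ∀ d, |sgnε d| ≤ 1)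
    (hsgn : ∀ d : ℝ, ε ≤ |d| → sgnε d = if 0 ≤ d then 1 else -1)
    (z : Fin N → ℝ) (s : Finset (Fin N))
    (hzs : ∀ i ∈ s, z i ≤ (1 / 2) * ∑ j ∈ Finset.univ.erase i, φ i j - ε)
    (hzc : ∀ i ∉ s, z i ≥ -((1 / 2) * ∑ j ∈ Finset.univ.erase i, φ i j) + ε) :
    ∃ d : Fin N → ℝ,
      ((∀ i, z i = d i - (1 / 2) * ∑ j ∈ Finset.univ.erase i, sgnε (d j) * φ i j) ∧
        (∀ i ∈ s, d i ≤ -ε) ∧ (∀ i ∉ s, ε ≤ d i) ∧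
        (∀ i, d i = z i - (1 / 2) * ∑ j ∈ Finset.univ.erase i,
            (if j ∈ s then (1 : ℝ) else -1) * φ i j)) ∧
      ∀ d' : Fin N → ℝ,
        (∀ i, z i = d' i - (1 / 2) * ∑ j ∈ Finset.univ.erase i, sgnε (d' j) * φ i j) →
        d' = d := by
  classical
  set σ : Fin N → ℝ := fun j => if j ∈ s then (1:ℝ) else -1 with hσdef
  have hσ1 : ∀ j ∈ s, σ j = 1 := fun j hj => by simp [hσdef, hj]
  have hσ2 : ∀ j, j ∉ s → σ j = -1 := fun j hj => by simp [hσdef, hj]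
  set d : Fin N → ℝ := fun i => z i - (1/2) * ∑ j ∈ Finset.univ.erase i, σ j * φ i j
    with hddef
  have hbd' : ∀ x : ℝ, -1 ≤ sgnε x ∧ sgnε x ≤ 1 := fun x => abs_le.mp (hbd x)
  -- bounds for any solution of the equation
  have key : ∀ d' : Fin N → ℝ,
      (∀ i, z i = d' i - (1/2) * ∑ j ∈ Finset.univ.erase i, sgnε (d' j) * φ i j) →
      (∀ i ∈ s, d' i ≤ -ε) ∧ (∀ i ∉ s, ε ≤ d' i) := by
    intro d' hd'
    constructor
    · intro i hi
      have h1 := hzs i hi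
      have h2 := hd' i
      have hsum : ∑ j ∈ Finset.univ.erase i, sgnε (d' j) * φ i j
          ≤ ∑ j ∈ Finset.univ.erase i, (-1) * φ i j := by
        apply Finset.sum_le_sum
        intro j hj
        have hne : i ≠ j := fun h => (Finset.mem_erase.mp hj).1 h.symm
        have hφ' := hφ i j hne
        have := (hbd' (d' j)).1
        nlinarith
      have hsum2 : ∑ j ∈ Finset.univ.erase i, (-1 : ℝ) * φ i j
          = -∑ j ∈ Finset.univ.erase i, φ i j := by
        rw [← Finset.sum_neg_distrib]; apply Finset.sum_congr rfl; intros; ring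
      linarith
    · intro i hi
      have h1 := hzc i hi
      have h2 := hd' i
      have hsum : ∑ j ∈ Finset.univ.erase i, φ i j
          ≤ ∑ j ∈ Finset.univ.erase i, sgnε (d' j) * φ i j := by
        apply Finset.sum_le_sum
        intro j hj
        have hne : i ≠ j := fun h => (Finset.mem_erase.mp hj).1 h.symm
        have hφ' := hφ i j hne
        have := (hbd' (d' j)).2
        nlinarith
      linarith
  -- bounds for d itself
  have hdb1 : ∀ i ∈ s, d i ≤ -ε := by
    intro i hi
    have h1 := hzs i hi
    have hsum : ∑ j ∈ Finset.univ.erase i, φ i j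
        ≤ ∑ j ∈ Finset.univ.erase i, σ j * φ i j := by
      apply Finset.sum_le_sum
      intro j hj
      have hne : i ≠ j := fun h => (Finset.mem_erase.mp hj).1 h.symm
      have hφ' := hφ i j hne
      by_cases hjs : j ∈ s
      · rw [hσ1 j hjs]; linarith
      · rw [hσ2 j hjs]; linarith
    simp only [hddef]
    linarith
  have hdb2 : ∀ i ∉ s, ε ≤ d i := by
    intro i hi
    have h1 := hzc i hi
    have hsum : ∑ j ∈ Finset.univ.erase i, σ j * φ i j
        ≤ ∑ j ∈ Finset.univ.erase i, (-1) * φ i j := by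
      apply Finset.sum_le_sum
      intro j hj
      have hne : i ≠ j := fun h => (Finset.mem_erase.mp hj).1 h.symm
      have hφ' := hφ i j hne
      by_cases hjs : j ∈ s
      · rw [hσ1 j hjs]; linarith
      · rw [hσ2 j hjs]
    have hsum2 : ∑ j ∈ Finset.univ.erase i, (-1 : ℝ) * φ i j
        = -∑ j ∈ Finset.univ.erase i, φ i j := by
      rw [← Finset.sum_neg_distrib]; apply Finset.sum_congr rfl; intros; ring
    simp only [hddef]
    linarith
  -- the sign of d j is determined
  have hsgnd : ∀ j, sgnε (d j) = -σ j := by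
    intro j
    by_cases hjs : j ∈ s
    · have h := hdb1 j hjs
      have hlt : d j < 0 := by linarith
      rw [hsgn (d j) (by rw [abs_of_neg hlt]; linarith), hσ1 j hjs]
      simp [not_le.mpr hlt]
    · have h := hdb2 j hjs
      rw [hsgn (d j) (by rw [abs_of_nonneg (by linarith)]; linarith), hσ2 j hjs]
      simp [le_trans hε.le h]
  have heq : ∀ i, z i = d i - (1/2) * ∑ j ∈ Finset.univ.erase i, sgnε (d j) * φ i j := by
    intro i
    have : ∑ j ∈ Finset.univ.erase i, sgnε (d j) * φ i j
        = -∑ j ∈ Finset.univ.erase i, σ j * φ i j := by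
      rw [← Finset.sum_neg_distrib]
      apply Finset.sum_congr rfl
      intro j _
      rw [hsgnd j]; ring
    rw [this]
    simp only [hddef]
    ring
  refine ⟨d, ⟨heq, hdb1, hdb2, fun i => rfl⟩, ?_⟩
  intro d' hd'
  obtain ⟨hb1, hb2⟩ := key d' hd'
  have hsgnd' : ∀ j, sgnε (d' j) = -σ j := by
    intro j
    by_cases hjs : j ∈ s
    · have h := hb1 j hjs
      have hlt : d' j < 0 := by linarith
      rw [hsgn (d' j) (by rw [abs_of_neg hlt]; linarith), hσ1 j hjs]
      simp [not_le.mpr hlt]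
    · have h := hb2 j hjs
      rw [hsgn (d' j) (by rw [abs_of_nonneg (by linarith)]; linarith), hσ2 j hjs]
      simp [le_trans hε.le h]
  funext i
  have h2 := hd' i
  have : ∑ j ∈ Finset.univ.erase i, sgnε (d' j) * φ i j
      = -∑ j ∈ Finset.univ.erase i, σ j * φ i j := by
    rw [← Finset.sum_neg_distrib]
    apply Finset.sum_congr rfl
    intro j _
    rw [hsgnd' j]; ring
  rw [this] at h2
  simp only [hddef]
  linarith
end

section
/- Let m > 0, let χ_i, χ_j > 0 with |χ_i − χ_j| ≥ m and χ_i + χ_j ≥ m, and let 0 < ε' ≤ m/8. Then the averaged logarithm satisfies |(1/ε'²) ∫_{χ_i−ε'/2}^{χ_i+ε'/2} ∫_{χ_j−ε'/2}^{χ_j+ε'/2} log(|χ − χ'|/(χ + χ')) dχ dχ' − log(|χ_i − χ_j|/(χ_i + χ_j))| ≤ 2ε'/m. -/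
/-!
Reflecting `t ↦ 2c - t` pairs `log t` with `log (2c - t)`, and
`log t + log (2c - t) = log (c² - (c - t)²)` lies between `log (c² - h²)` and `log c²`; so, by
`log (1 + u) ≤ u`, the mean of `log` over `[c - h, c + h]` differs from `log c` by at most
`h² / (2 (c² - h²))`. Substituting `t = x ∓ y` turns the box average of the kernel
`log |x - y| - log (x + y)` into a difference of two iterated window means of `log`, centred
at `χᵢ - χⱼ` and `χᵢ + χⱼ`; the one-dimensional estimate, applied twice to each, bounds the
error by `(ε' / m)²`.
-/

open Real intervalIntegral Set
open MeasureTheory (volume)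

theorem intervalIntegrable_log_sub_left (x a b : ℝ) :
    IntervalIntegrable (fun y => log (x - y)) volume a b := by
  simpa using (intervalIntegrable_log' (a := x - a) (b := x - b)).comp_sub_left x

theorem intervalIntegrable_log_add_left (x a b : ℝ) :
    IntervalIntegrable (fun y => log (x + y)) volume a b := by
  simpa using (intervalIntegrable_log' (a := x + a) (b := x + b)).comp_add_left x

theorem integral_log_sub_left_eq (x b h : ℝ) :
    ∫ y in (b - h)..(b + h), log (x - y) = ∫ t in (x - b - h)..(x - b + h), log t := by
  rw [integral_comp_sub_left]; congr 1 <;> ring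

theorem integral_log_add_left_eq (x b h : ℝ) :
    ∫ y in (b - h)..(b + h), log (x + y) = ∫ t in (x + b - h)..(x + b + h), log t := by
  rw [integral_comp_add_left]; congr 1 <;> ring

theorem continuous_integral_log_window (h : ℝ) :
    Continuous fun c => ∫ t in (c - h)..(c + h), log t := by
  simp only [integral_log]
  fun_prop

theorem integral_log_sub_eq_half_integral {c h : ℝ} (hh : 0 ≤ h) (hc : h < |c|) :
    (∫ t in (c - h)..(c + h), log t) - 2 * h * log c =
      (∫ t in (c - h)..(c + h), (log (c ^ 2 - (c - t) ^ 2) - log (c ^ 2))) / 2 := by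
  have hreflect :
      ∫ t in (c - h)..(c + h), log (2 * c - t) = ∫ t in (c - h)..(c + h), log t := by
    rw [integral_comp_sub_left]; ring_nf
  have hsplit : EqOn (fun t => log (c ^ 2 - (c - t) ^ 2) - log (c ^ 2))
      (fun t => log t + log (2 * c - t) - log (c ^ 2)) (uIcc (c - h) (c + h)) := by
    intro t ht
    rw [uIcc_of_le (by linarith), ← mem_Icc_iff_abs_le] at ht
    have ht0 : t ≠ 0 := by rintro rfl; rw [sub_zero] at ht; linarith
    have ht0' : 2 * c - t ≠ 0 := by
      intro h0
      rw [show c - t = -c by linarith, abs_neg] at ht; linarith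
    simp only
    rw [← log_mul ht0 ht0']; ring_nf
  rw [integral_congr hsplit,
    integral_sub (intervalIntegrable_log'.add (intervalIntegrable_log_sub_left _ _ _))
      intervalIntegrable_const,
    integral_add intervalIntegrable_log' (intervalIntegrable_log_sub_left _ _ _), hreflect,
    integral_const, log_pow, smul_eq_mul]
  push_cast; ring

theorem abs_integral_log_sub_le {c h : ℝ} (hh : 0 ≤ h) (hc : h < |c|) :
    |(∫ t in (c - h)..(c + h), log t) - 2 * h * log c| ≤ h ^ 3 / (c ^ 2 - h ^ 2) := by
  have hc0 : c ≠ 0 := abs_pos.1 (hh.trans_lt hc)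
  have hc2 : 0 < c ^ 2 := by positivity
  have hgap : 0 < c ^ 2 - h ^ 2 := by nlinarith [sq_abs c, abs_nonneg c]
  have hlog : log (c ^ 2) - log (c ^ 2 - h ^ 2) ≤ h ^ 2 / (c ^ 2 - h ^ 2) := by
    rw [← log_div hc2.ne' hgap.ne']
    calc _ ≤ c ^ 2 / (c ^ 2 - h ^ 2) - 1 := log_le_sub_one_of_pos (by positivity)
      _ = _ := by field_simp; ring
  have hpoint : ∀ t ∈ uIoc (c - h) (c + h),
      ‖log (c ^ 2 - (c - t) ^ 2) - log (c ^ 2)‖ ≤ h ^ 2 / (c ^ 2 - h ^ 2) := by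
    intro t ht
    rw [uIoc_of_le (by linarith)] at ht
    have ht' : |c - t| ≤ h := mem_Icc_iff_abs_le.2 (Ioc_subset_Icc_self ht)
    have hsq : (c - t) ^ 2 ≤ h ^ 2 := sq_le_sq' (abs_le.1 ht').1 (abs_le.1 ht').2
    have hlo : log (c ^ 2 - h ^ 2) ≤ log (c ^ 2 - (c - t) ^ 2) := log_le_log hgap (by linarith)
    have hhi : log (c ^ 2 - (c - t) ^ 2) ≤ log (c ^ 2) := log_le_log (by linarith) (by nlinarith)
    rw [Real.norm_eq_abs, abs_of_nonpos (by linarith)]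
    linarith
  have hint := norm_integral_le_of_norm_le_const hpoint
  rw [Real.norm_eq_abs, show c + h - (c - h) = 2 * h by ring,
    abs_of_nonneg (show (0 : ℝ) ≤ 2 * h by linarith)] at hint
  rw [integral_log_sub_eq_half_integral hh hc, abs_div, abs_two]
  calc _ ≤ h ^ 2 / (c ^ 2 - h ^ 2) * (2 * h) / 2 := by gcongr
    _ = _ := by ring

theorem abs_integral_integral_log_sub_le {d h m : ℝ} (hh : 0 < h) (hm : 4 * h ≤ m)
    (hd : m ≤ |d|) :
    |(∫ c in (d - h)..(d + h), ∫ t in (c - h)..(c + h), log t) - 4 * h ^ 2 * log d| ≤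
      8 * h ^ 4 / m ^ 2 := by
  have hwindow : ∀ c ∈ uIoc (d - h) (d + h),
      ‖(∫ t in (c - h)..(c + h), log t) - 2 * h * log c‖ ≤ 2 * h ^ 3 / m ^ 2 := by
    intro c hc
    rw [uIoc_of_le (by linarith)] at hc
    have hdc : m - h ≤ |c| := by
      linarith [abs_sub_abs_le_abs_sub d c, mem_Icc_iff_abs_le.2 (Ioc_subset_Icc_self hc)]
    have hgap : m ^ 2 / 2 ≤ c ^ 2 - h ^ 2 := by nlinarith [sq_abs c]
    calc _ ≤ h ^ 3 / (c ^ 2 - h ^ 2) := abs_integral_log_sub_le hh.le (by linarith)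
      _ ≤ h ^ 3 / (m ^ 2 / 2) := by gcongr; nlinarith
      _ = _ := by ring
  have hsplit : (∫ c in (d - h)..(d + h), ∫ t in (c - h)..(c + h), log t) - 4 * h ^ 2 * log d =
      (∫ c in (d - h)..(d + h), ((∫ t in (c - h)..(c + h), log t) - 2 * h * log c)) +
        2 * h * ((∫ c in (d - h)..(d + h), log c) - 2 * h * log d) := by
    rw [integral_sub ((continuous_integral_log_window h).intervalIntegrable _ _)
      (intervalIntegrable_log'.const_mul _), integral_const_mul]
    ring
  have houter := norm_integral_le_of_norm_le_const hwindow
  rw [Real.norm_eq_abs, show d + h - (d - h) = 2 * h by ring,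
    abs_of_pos (show 0 < 2 * h by linarith)] at houter
  have hcentre := hwindow d (by rw [uIoc_of_le (by linarith)]; constructor <;> linarith)
  rw [Real.norm_eq_abs] at hcentre
  rw [hsplit]
  calc _ ≤ 2 * h ^ 3 / m ^ 2 * (2 * h) + 2 * h * (2 * h ^ 3 / m ^ 2) := by
        grw [abs_add_le, abs_mul, abs_of_pos (show 0 < 2 * h by linarith), houter, hcentre]
    _ = _ := by ring

theorem integral_integral_log_abs_sub_div_add {a b h : ℝ} (hh : 0 ≤ h) (hsep : 2 * h < |a - b|)
    (hsum : 2 * h < a + b) :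
    ∫ x in (a - h)..(a + h), ∫ y in (b - h)..(b + h), log (|x - y| / (x + y)) =
      (∫ c in (a - b - h)..(a - b + h), ∫ t in (c - h)..(c + h), log t) -
        ∫ c in (a + b - h)..(a + b + h), ∫ t in (c - h)..(c + h), log t := by
  have hinner : EqOn (fun x => ∫ y in (b - h)..(b + h), log (|x - y| / (x + y)))
      (fun x =>
        (∫ t in (x - b - h)..(x - b + h), log t) - ∫ t in (x + b - h)..(x + b + h), log t)
      (uIcc (a - h) (a + h)) := by
    intro x hx
    rw [uIcc_of_le (by linarith), ← mem_Icc_iff_abs_le] at hx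
    have hsplit : EqOn (fun y => log (|x - y| / (x + y))) (fun y => log (x - y) - log (x + y))
        (uIcc (b - h) (b + h)) := by
      intro y hy
      rw [uIcc_of_le (by linarith), ← mem_Icc_iff_abs_le] at hy
      have hsub : x - y ≠ 0 := by
        intro h0
        rw [show a - b = (a - x) - (b - y) by linarith] at hsep
        linarith [abs_sub (a - x) (b - y)]
      have hadd : 0 < x + y := by linarith [(abs_le.1 hx).2, (abs_le.1 hy).2]
      simp only
      rw [log_div (abs_ne_zero.2 hsub) hadd.ne', log_abs]
    simp only
    rw [integral_congr hsplit, integral_sub (intervalIntegrable_log_sub_left _ _ _)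
      (intervalIntegrable_log_add_left _ _ _), integral_log_sub_left_eq, integral_log_add_left_eq]
  have hcont := continuous_integral_log_window h
  have hcont_sub : Continuous fun x => ∫ t in (x - b - h)..(x - b + h), log t :=
    hcont.comp (continuous_sub_right b)
  have hcont_add : Continuous fun x => ∫ t in (x + b - h)..(x + b + h), log t :=
    hcont.comp (continuous_add_const b)
  rw [integral_congr hinner,
    integral_sub (hcont_sub.intervalIntegrable _ _) (hcont_add.intervalIntegrable _ _),
    integral_comp_sub_right (fun c => ∫ t in (c - h)..(c + h), log t),
    integral_comp_add_right (fun c => ∫ t in (c - h)..(c + h), log t)]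
  congr 1 <;> ring_nf

theorem mollified_log_kernel_bound_general (m χi χj ε' : ℝ)
    (hsep : m ≤ |χi - χj|) (hsum : m ≤ χi + χj)
    (hε' : 0 < ε') (hε'm : ε' ≤ m / 8) :
    |(1 / ε' ^ 2) *
        (∫ χ in (χi - ε' / 2)..(χi + ε' / 2),
          ∫ χ' in (χj - ε' / 2)..(χj + ε' / 2),
            Real.log (|χ - χ'| / (χ + χ'))) -
      Real.log (|χi - χj| / (χi + χj))| ≤ 2 * ε' / m := by
  obtain ⟨h, rfl⟩ : ∃ h, ε' = 2 * h := ⟨ε' / 2, by ring⟩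
  rw [show 2 * h / 2 = h by ring]
  have hh : 0 < h := by linarith
  have hm : 0 < m := by linarith
  rw [integral_integral_log_abs_sub_div_add hh.le (by linarith) (by linarith),
    log_div (show 0 < |χi - χj| by linarith).ne' (show 0 < χi + χj by linarith).ne', log_abs]
  set A := ∫ c in (χi - χj - h)..(χi - χj + h), ∫ t in (c - h)..(c + h), log t
  set B := ∫ c in (χi + χj - h)..(χi + χj + h), ∫ t in (c - h)..(c + h), log t
  have hA : |A - 4 * h ^ 2 * log (χi - χj)| ≤ 8 * h ^ 4 / m ^ 2 :=
    abs_integral_integral_log_sub_le hh (by linarith) hsep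
  have hB : |B - 4 * h ^ 2 * log (χi + χj)| ≤ 8 * h ^ 4 / m ^ 2 :=
    abs_integral_integral_log_sub_le hh (by linarith) (hsum.trans (le_abs_self _))
  calc _ = |(A - 4 * h ^ 2 * log (χi - χj)) - (B - 4 * h ^ 2 * log (χi + χj))| / (4 * h ^ 2) := by
        rw [div_eq_mul_inv _ (4 * h ^ 2), ← abs_of_pos (show 0 < (4 * h ^ 2)⁻¹ by positivity), ← abs_mul]
        congr 1; field_simp; ring
    _ ≤ (8 * h ^ 4 / m ^ 2 + 8 * h ^ 4 / m ^ 2) / (4 * h ^ 2) := by grw [abs_sub, hA, hB]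
    _ = 2 * (2 * h) / m * (h / m) := by field_simp; ring
    _ ≤ 2 * (2 * h) / m :=
        mul_le_of_le_one_right (by positivity) ((div_le_one hm).2 (by linarith))

/-- Mollification error for the logarithmic interaction kernel: replacing the
point values by box averages of width `ε' ≤ m/8` changes
`log(|χ_i−χ_j|/(χ_i+χ_j))` by at most `2ε'/m`, provided `|χ_i−χ_j| ≥ m` and
`χ_i+χ_j ≥ m`. -/
theorem mollified_log_kernel_bound (m χi χj ε' : ℝ) (hm : 0 < m)
    (hχi : 0 < χi) (hχj : 0 < χj)
    (hsep : m ≤ |χi - χj|) (hsum : m ≤ χi + χj)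
    (hε' : 0 < ε') (hε'm : ε' ≤ m / 8) :
    |(1 / ε' ^ 2) *
        (∫ χ in (χi - ε' / 2)..(χi + ε' / 2),
          ∫ χ' in (χj - ε' / 2)..(χj + ε' / 2),
            Real.log (|χ - χ'| / (χ + χ'))) -
      Real.log (|χi - χj| / (χi + χj))| ≤ 2 * ε' / m :=
  mollified_log_kernel_bound_general m χi χj ε' hsep hsum hε' hε'm
end

section
/- Let F : ℝ → ℝ be a Schwartz function with ∫_ℝ F(χ) dχ = 0. Then ∫_ℝ ∫_ℝ F(χ) F(χ') log|χ − χ'| dχ dχ' ≤ 0. -/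
/-!
Frullani's integral gives `2 log |x - y| = ∫₀^∞ (e^{-t} - e^{-t (x-y)²}) dt / t`. By Fubini the
form becomes `∫₀^∞ t⁻¹ (e^{-t} (∫ f)² - ∫∫ f(x) f(y) e^{-t (x-y)²}) dt`. The first term vanishes
since `∫ f = 0`, and the Gaussian form is nonnegative: `e^{-t (x-y)²}` is a constant multiple of
`∫ e^{-2t (x-z)²} e^{-2t (y-z)²} dz`, so the form is a constant multiple of
`∫ (∫ f(x) e^{-2t (x-z)²} dx)² dz`.
-/

open MeasureTheory Real Set

theorem abs_exp_neg_sub_exp_neg_le (u v : ℝ) :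
    |exp (-u) - exp (-v)| ≤ |u - v| * exp (-min u v) := by
  wlog huv : u ≤ v generalizing u v
  · rw [abs_sub_comm, abs_sub_comm u, min_comm]
    exact this v u (le_of_not_ge huv)
  have hexp : exp (-v) = exp (-u) * exp (-(v - u)) := by rw [← exp_add]; ring_nf
  have hle : exp (-v) ≤ exp (-u) := exp_le_exp.2 (by linarith)
  rw [abs_of_nonneg (sub_nonneg.2 hle), abs_of_nonpos (by linarith), min_eq_left huv, hexp]
  nlinarith [add_one_le_exp (-(v - u)), exp_pos (-u)]

noncomputable def frullaniKernel (r t : ℝ) : ℝ := t⁻¹ * (exp (-t) - exp (-(r * t)))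

section frullaniKernel

variable {r : ℝ}

theorem abs_frullaniKernel_le {t : ℝ} (ht : 0 < t) :
    |frullaniKernel r t| ≤ |1 - r| * exp (-min 1 r * t) := by
  have hbound := abs_exp_neg_sub_exp_neg_le t (r * t)
  rw [show min t (r * t) = min 1 r * t by rw [min_mul_of_nonneg _ _ ht.le, one_mul],
    show t - r * t = (1 - r) * t by ring, abs_mul, abs_of_pos ht] at hbound
  rw [frullaniKernel, abs_mul, abs_inv, abs_of_pos ht, neg_mul]
  calc t⁻¹ * |exp (-t) - exp (-(r * t))| ≤ t⁻¹ * (|1 - r| * t * exp (-(min 1 r * t))) := by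
        gcongr
    _ = |1 - r| * exp (-(min 1 r * t)) := by field_simp

theorem integrableOn_frullaniKernel (hr : 0 < r) : IntegrableOn (frullaniKernel r) (Ioi 0) := by
  refine Integrable.mono' ((exp_neg_integrableOn_Ioi 0 (lt_min one_pos hr)).const_mul |1 - r|)
    (by unfold frullaniKernel; fun_prop) ?_
  filter_upwards [ae_restrict_mem measurableSet_Ioi] with t ht
  exact abs_frullaniKernel_le ht

theorem integral_frullaniKernel (hr : 0 < r) : ∫ t in Ioi 0, frullaniKernel r t = log r := by
  have hexp : Continuous fun x : ℝ => exp (-x) := by fun_prop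
  have h := Frullani.integral_Ioi_eq (f := fun x => exp (-x)) (a := 1) (b := r) (L := 1) (R := 0)
    (hexp.locallyIntegrable.locallyIntegrableOn _) one_pos hr
    (by simpa using (hexp.tendsto 0).mono_left nhdsWithin_le_nhds)
    tendsto_exp_neg_atTop_nhds_zero
    (by simp only [smul_eq_mul, one_mul]; exact integrableOn_frullaniKernel hr)
  simpa [frullaniKernel] using h

theorem integral_abs_frullaniKernel (hr : 0 < r) :
    ∫ t in Ioi 0, |frullaniKernel r t| = |log r| := by
  rcases le_total 1 r with h1 | h1
  · have hnn : ∀ t ∈ Ioi (0 : ℝ), |frullaniKernel r t| = frullaniKernel r t := fun t ht =>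
      abs_of_nonneg <| mul_nonneg (inv_nonneg.2 (le_of_lt ht))
        (sub_nonneg.2 <| exp_le_exp.2 <| neg_le_neg <| le_mul_of_one_le_left (le_of_lt ht) h1)
    rw [setIntegral_congr_fun measurableSet_Ioi hnn, integral_frullaniKernel hr,
      abs_of_nonneg (log_nonneg h1)]
  · have hnp : ∀ t ∈ Ioi (0 : ℝ), |frullaniKernel r t| = -frullaniKernel r t := fun t ht =>
      abs_of_nonpos <| mul_nonpos_of_nonneg_of_nonpos (inv_nonneg.2 (le_of_lt ht))
        (sub_nonpos.2 <| exp_le_exp.2 <| neg_le_neg <| mul_le_of_le_one_left (le_of_lt ht) h1)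
    rw [setIntegral_congr_fun measurableSet_Ioi hnp, integral_neg, integral_frullaniKernel hr,
      abs_of_nonpos (log_nonpos hr.le h1)]

end frullaniKernel

theorem exp_neg_mul_sq_sub_mul_exp_neg_mul_sq_sub (t x y z : ℝ) :
    exp (-(2 * t) * (x - z) ^ 2) * exp (-(2 * t) * (y - z) ^ 2) =
      exp (-t * (x - y) ^ 2) * exp (-(4 * t) * (z - (x + y) / 2) ^ 2) := by
  rw [← exp_add, ← exp_add]
  ring_nf

section GaussianKernel

variable {f : ℝ → ℝ} {t : ℝ}

theorem integrable_mul_mul_exp_neg_mul_sq_sub (hf : Integrable f) (ht : 0 ≤ t) :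
    Integrable (fun p : ℝ × ℝ => f p.1 * f p.2 * exp (-t * (p.1 - p.2) ^ 2))
      (volume.prod volume) := by
  refine (hf.mul_prod hf).mul_bdd (c := 1) (by fun_prop) (ae_of_all _ fun p => ?_)
  rw [norm_of_nonneg (exp_nonneg _), exp_le_one_iff]
  nlinarith [sq_nonneg (p.1 - p.2)]

theorem integral_mul_mul_exp_neg_mul_sq_sub_nonneg (hf : Integrable f) (ht : 0 < t) :
    0 ≤ ∫ p : ℝ × ℝ, f p.1 * f p.2 * exp (-t * (p.1 - p.2) ^ 2) ∂(volume.prod volume) := by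
  let g (z x : ℝ) : ℝ := f x * exp (-(2 * t) * (x - z) ^ 2)
  have hsplit (p : ℝ × ℝ) (z : ℝ) : g z p.1 * g z p.2 =
      f p.1 * f p.2 * exp (-t * (p.1 - p.2) ^ 2) * exp (-(4 * t) * (z - (p.1 + p.2) / 2) ^ 2) := by
    rw [mul_mul_mul_comm, exp_neg_mul_sq_sub_mul_exp_neg_mul_sq_sub]
    ring
  have hgauss (m : ℝ) : ∫ z, exp (-(4 * t) * (z - m) ^ 2) = √(π / (4 * t)) :=
    (integral_sub_right_eq_self (fun z => exp (-(4 * t) * z ^ 2)) m).trans (integral_gaussian _)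
  have hmeas : AEStronglyMeasurable (Function.uncurry fun (p : ℝ × ℝ) z => g z p.1 * g z p.2)
      ((volume.prod volume).prod volume) := by
    refine (hf.1.comp_fst.comp_fst.mul ?_).mul (hf.1.comp_snd.comp_fst.mul ?_) <;>
      exact Continuous.aestronglyMeasurable (by fun_prop)
  have hint : Integrable (Function.uncurry fun (p : ℝ × ℝ) z => g z p.1 * g z p.2)
      ((volume.prod volume).prod volume) := by
    refine (integrable_prod_iff hmeas).2 ⟨ae_of_all _ fun p => ?_, ?_⟩
    · simp only [Function.uncurry_apply_pair, hsplit]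
      exact ((integrable_exp_neg_mul_sq (by positivity)).comp_sub_right _).const_mul _
    · refine ((integrable_mul_mul_exp_neg_mul_sq_sub hf ht.le).norm.mul_const
        (√(π / (4 * t)))).congr (ae_of_all _ fun p => ?_)
      simp only [Function.uncurry_apply_pair, hsplit, norm_mul (f p.1 * f p.2 * _),
        norm_of_nonneg (exp_nonneg _), integral_const_mul, hgauss]
  have hswap := integral_integral_swap hint
  have hinner (p : ℝ × ℝ) : ∫ z, g z p.1 * g z p.2 =
      f p.1 * f p.2 * exp (-t * (p.1 - p.2) ^ 2) * √(π / (4 * t)) := by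
    simp only [hsplit, integral_const_mul, hgauss]
  simp only [hinner, integral_mul_const, integral_prod_mul] at hswap
  refine nonneg_of_mul_nonneg_left (hswap ▸ integral_nonneg fun z => mul_self_nonneg _) ?_
  positivity

end GaussianKernel

theorem abs_log_abs_le_abs_add_indicator (u : ℝ) :
    |log (|u|)| ≤ |u| + (Icc (-1) 1).indicator (fun v => |log v|) u := by
  by_cases hu : u ∈ Icc (-1) 1
  · rw [indicator_of_mem hu, log_abs]
    linarith [abs_nonneg u]
  · have h1 : 1 ≤ |u| := by
      rw [mem_Icc, ← abs_le] at hu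
      linarith
    rw [indicator_of_notMem hu, add_zero, abs_of_nonneg (log_nonneg h1)]
    exact log_le_self (abs_nonneg u)

theorem integrable_indicator_Icc_abs_log :
    Integrable ((Icc (-1) 1).indicator fun v => |log v|) := by
  refine (integrable_indicator_iff measurableSet_Icc).2 ?_
  exact ((integrableOn_Icc_iff_integrableOn_Ioc (f := log) (a := -1) (b := 1)).2
    intervalIntegral.intervalIntegrable_log'.1).abs

theorem integrable_mul_mul_log_abs_sub {f : ℝ → ℝ} {C : ℝ} (hf : Integrable f)
    (hxf : Integrable fun x => x * f x) (hC : ∀ x, |f x| ≤ C) :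
    Integrable (fun p : ℝ × ℝ => f p.1 * f p.2 * log |p.1 - p.2|) (volume.prod volume) := by
  set ι := (Icc (-1 : ℝ) 1).indicator fun v => |log v|
  have hconv : Integrable (fun p : ℝ × ℝ => |f p.2| * ι (p.1 - p.2)) (volume.prod volume) := by
    simpa using hf.abs.convolution_integrand (ContinuousLinearMap.mul ℝ ℝ)
      integrable_indicator_Icc_abs_log
  refine Integrable.mono' (((hxf.abs.mul_prod hf.abs).add (hf.abs.mul_prod hxf.abs)).add
      (hconv.const_mul C)) ?_ (ae_of_all _ fun p => ?_)
  · exact (hf.1.comp_fst.mul hf.1.comp_snd).mul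
      (Measurable.aestronglyMeasurable (by fun_prop))
  have hι : 0 ≤ ι (p.1 - p.2) := indicator_nonneg (fun _ _ => abs_nonneg _) _
  have hlog := abs_log_abs_le_abs_add_indicator (p.1 - p.2)
  have hsub := abs_sub p.1 p.2
  have hfx := hC p.1
  simp only [Pi.add_apply, norm_mul, norm_eq_abs, abs_mul] at hlog ⊢
  have hff : 0 ≤ |f p.1| * |f p.2| := by positivity
  calc |f p.1| * |f p.2| * |log (|p.1 - p.2|)|
      ≤ |f p.1| * |f p.2| * (|p.1| + |p.2|) + |f p.1| * |f p.2| * ι (p.1 - p.2) := by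
        nlinarith [mul_le_mul_of_nonneg_left hlog hff, mul_le_mul_of_nonneg_left hsub hff]
    _ ≤ _ := by nlinarith [mul_le_mul_of_nonneg_right hfx (mul_nonneg (abs_nonneg (f p.2)) hι)]

theorem ae_sq_sub_pos :
    ∀ᵐ p ∂(volume.prod volume : Measure (ℝ × ℝ)), 0 < (p.1 - p.2) ^ 2 := by
  rw [Measure.ae_prod_iff_ae_ae (measurableSet_lt measurable_const (by fun_prop))]
  filter_upwards with x
  filter_upwards [volume.ae_ne x] with y hy
  exact sq_pos_of_ne_zero (sub_ne_zero.2 hy.symm)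

theorem log_sq_eq_two_mul_log_abs (x : ℝ) : log (x ^ 2) = 2 * log |x| := by
  rw [log_pow, log_abs]
  norm_num

theorem integral_mul_mul_log_abs_sub_nonpos {f : ℝ → ℝ} (hf : Integrable f)
    (hmean : ∫ x, f x = 0)
    (hlog : Integrable (fun p : ℝ × ℝ => f p.1 * f p.2 * log |p.1 - p.2|) (volume.prod volume)) :
    ∫ p : ℝ × ℝ, f p.1 * f p.2 * log |p.1 - p.2| ∂(volume.prod volume) ≤ 0 := by
  let Φ (p : ℝ × ℝ) (t : ℝ) : ℝ := f p.1 * f p.2 * frullaniKernel ((p.1 - p.2) ^ 2) t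
  have hmeas : AEStronglyMeasurable (Function.uncurry Φ)
      ((volume.prod volume).prod (volume.restrict (Ioi 0))) := by
    refine (hf.1.comp_fst.comp_fst.mul hf.1.comp_snd.comp_fst).mul ?_
    exact Measurable.aestronglyMeasurable (by unfold frullaniKernel; fun_prop)
  have hint : Integrable (Function.uncurry Φ)
      ((volume.prod volume).prod (volume.restrict (Ioi 0))) := by
    refine (integrable_prod_iff hmeas).2 ⟨?_, (hlog.norm.const_mul 2).congr ?_⟩
    · filter_upwards [ae_sq_sub_pos] with p hp
      exact (integrableOn_frullaniKernel hp).const_mul (f p.1 * f p.2)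
    · filter_upwards [ae_sq_sub_pos] with p hp
      simp only [Function.uncurry_apply_pair, Φ, norm_mul, norm_eq_abs, integral_const_mul,
        integral_abs_frullaniKernel hp, log_sq_eq_two_mul_log_abs, abs_mul, abs_two]
      ring
  have hinner : ∀ᵐ p ∂(volume.prod volume), ∫ t in Ioi 0, Φ p t =
      2 * (f p.1 * f p.2 * log |p.1 - p.2|) := by
    filter_upwards [ae_sq_sub_pos] with p hp
    rw [integral_const_mul, integral_frullaniKernel hp, log_sq_eq_two_mul_log_abs]
    ring
  have houter (t : ℝ) (ht : 0 < t) : ∫ p, Φ p t ∂(volume.prod volume) =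
      -(t⁻¹ * ∫ p : ℝ × ℝ, f p.1 * f p.2 * exp (-t * (p.1 - p.2) ^ 2) ∂(volume.prod volume)) := by
    have hsplit (p : ℝ × ℝ) : Φ p t = t⁻¹ * exp (-t) * (f p.1 * f p.2) -
        t⁻¹ * (f p.1 * f p.2 * exp (-t * (p.1 - p.2) ^ 2)) := by
      simp only [Φ, frullaniKernel]
      rw [show -t * (p.1 - p.2) ^ 2 = -((p.1 - p.2) ^ 2 * t) by ring]
      ring
    simp only [hsplit]
    rw [integral_sub ((hf.mul_prod hf).const_mul _)
        ((integrable_mul_mul_exp_neg_mul_sq_sub hf ht.le).const_mul _),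
      integral_const_mul, integral_const_mul, integral_prod_mul, hmean]
    ring
  have hdouble : 2 * ∫ p, f p.1 * f p.2 * log |p.1 - p.2| ∂(volume.prod volume) ≤ 0 :=
    calc 2 * ∫ p, f p.1 * f p.2 * log |p.1 - p.2| ∂(volume.prod volume)
        = ∫ p, (∫ t in Ioi 0, Φ p t) ∂(volume.prod volume) := by
          rw [← integral_const_mul]
          exact integral_congr_ae (hinner.mono fun p hp => hp.symm)
      _ = ∫ t in Ioi 0, ∫ p, Φ p t ∂(volume.prod volume) := integral_integral_swap hint
      _ ≤ 0 := setIntegral_nonpos measurableSet_Ioi fun t ht => by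
        rw [houter t ht, neg_nonpos]
        exact mul_nonneg (inv_nonneg.2 (le_of_lt ht))
          (integral_mul_mul_exp_neg_mul_sq_sub_nonneg hf ht)
  linarith

/-- Negativity of the logarithmic quadratic form on mean-zero Schwartz
functions: if `∫ F = 0` then `∫∫ F(χ)F(χ') log|χ−χ'| dχ dχ' ≤ 0`. -/
theorem log_quadratic_form_nonpos (F : SchwartzMap ℝ ℝ)
    (hmean : ∫ χ : ℝ, F χ = 0) :
    (∫ χ : ℝ, ∫ χ' : ℝ, F χ * F χ' * Real.log |χ - χ'|) ≤ 0 := by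
  have hxF : Integrable fun x : ℝ => x * F x :=
    (F.integrable_pow_mul volume 1).mono' (by fun_prop) (ae_of_all _ fun x => by simp)
  have hlog := integrable_mul_mul_log_abs_sub F.integrable hxF
    (fun x => (norm_eq_abs (F x)) ▸ F.norm_le_seminorm ℝ x)
  rw [integral_integral hlog]
  exact integral_mul_mul_log_abs_sub_nonpos F.integrable hmean hlog
end

section
/- Let N ∈ ℕ, ΔX ≥ ε > 0, and suppose for each i ∈ {1,...,N} real numbers x_i, effective imprecision Δx ≥ 0, impact parameters y_i, scattering shifts φ_{ij}, and functions X_i : ℝ → ℝ are given such that: (a) for all i, x_*: x_i < x_* − Δx implies X_i(x_*) < x_* − ΔX and x_i > x_* + Δx implies X_i(x_*) > x_* + ΔX; (b) for all x_*, y_i = X_i(x_*) − (1/2)∑_{j≠i} sgn_ε(X_j(x_*) − x_*) φ_{ij} where sgn_ε is a bounded regularised sign with |sgn_ε| ≤ 1 and sgn_ε = sign off (−ε,ε); (c) for each i there exists x_* with X_i(x_*) ∈ [x_* − ΔX, x_* + ΔX] and then x_* ∈ [x_i − Δx, x_i + Δx]. Then for every i there exist δ_i with |δ_i| ≤ ΔX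 + Δx and coefficients f_{ij} ∈ [−1,1] with f_{ij} = sign(x_i − x_j) whenever |x_i − x_j| > 2Δx, such that y_i = x_i + (1/2)∑_{j≠i} f_{ij} φ_{ij} + δ_i. -/
open Finset

/-- Approximate semiclassical Bethe equations: effective positions `x_i` defined
from the magnifying-glass positions `X_i(x_*)` satisfy
`y_i = x_i + ½ ∑_{j≠i} f_{ij} φ_{ij} + δ_i` with `|δ_i| ≤ ΔX + Δx`,
`f_{ij} ∈ [−1,1]`, and `f_{ij} = sign(x_i − x_j)` whenever `|x_i − x_j| > 2Δx`. -/
theorem approximate_bethe_equations (N : ℕ) (ε ΔX Δx : ℝ)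
    (hε : 0 < ε) (hΔX : ε ≤ ΔX) (hΔx : 0 ≤ Δx)
    (x y : Fin N → ℝ) (φ : Fin N → Fin N → ℝ) (X : Fin N → ℝ → ℝ)
    (sgnε : ℝ → ℝ) (hbd : ∀ d, |sgnε d| ≤ 1)
    (hsgn : ∀ d : ℝ, ε ≤ |d| → sgnε d = if 0 ≤ d then 1 else -1)
    (ha : ∀ (i : Fin N) (xs : ℝ),
      (x i < xs - Δx → X i xs < xs - ΔX) ∧ (x i > xs + Δx → X i xs > xs + ΔX))
    (hb : ∀ (i : Fin N) (xs : ℝ),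
      y i = X i xs - (1 / 2) * ∑ j ∈ Finset.univ.erase i, sgnε (X j xs - xs) * φ i j)
    (hc : ∀ i : Fin N, ∃ xs : ℝ,
      (X i xs ∈ Set.Icc (xs - ΔX) (xs + ΔX)) ∧ xs ∈ Set.Icc (x i - Δx) (x i + Δx)) :
    ∃ (δ : Fin N → ℝ) (f : Fin N → Fin N → ℝ),
      (∀ i, |δ i| ≤ ΔX + Δx) ∧
      (∀ i j, f i j ∈ Set.Icc (-1 : ℝ) 1) ∧
      (∀ i j, 2 * Δx < |x i - x j| →
        f i j = if 0 ≤ x i - x j then 1 else -1) ∧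
      (∀ i, y i = x i + (1 / 2) * ∑ j ∈ Finset.univ.erase i, f i j * φ i j + δ i) := by
  choose xs hX hxs using hc
  refine ⟨fun i => X i (xs i) - x i, fun i j => - sgnε (X j (xs i) - xs i),
    ?_, ?_, ?_, ?_⟩
  · intro i
    obtain ⟨h1, h2⟩ := hX i
    obtain ⟨h3, h4⟩ := hxs i
    show |X i (xs i) - x i| ≤ ΔX + Δx
    rw [abs_le]
    constructor <;> linarith
  · intro i j
    have := hbd (X j (xs i) - xs i)
    rw [abs_le] at this
    constructor <;> simp <;> linarith [this.1, this.2]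
  · intro i j h
    obtain ⟨h3, h4⟩ := hxs i
    rcases abs_cases (x i - x j) with ⟨he, _⟩ | ⟨he, hneg⟩
    · -- x i - x j ≥ 0, so x j < xs i - Δx
      rw [he] at h
      have hj : x j < xs i - Δx := by linarith
      have hlt : X j (xs i) < xs i - ΔX := (ha j (xs i)).1 hj
      have habs : ε ≤ |X j (xs i) - xs i| := by
        rw [abs_sub_comm, abs_of_nonneg (by linarith)]; linarith
      show -sgnε (X j (xs i) - xs i) = _
      rw [hsgn _ habs]
      have hn : ¬ (0 ≤ X j (xs i) - xs i) := by linarith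
      rw [if_neg hn, if_pos (by linarith)]
      ring
    · rw [he] at h
      have hj : x j > xs i + Δx := by linarith
      have hgt : X j (xs i) > xs i + ΔX := (ha j (xs i)).2 hj
      have habs : ε ≤ |X j (xs i) - xs i| := by
        rw [abs_of_nonneg (by linarith)]; linarith
      show -sgnε (X j (xs i) - xs i) = _
      rw [hsgn _ habs, if_pos (by linarith), if_neg (by linarith)]
  · intro i
    rw [hb i (xs i)]
    have : ∑ j ∈ Finset.univ.erase i, (- sgnε (X j (xs i) - xs i)) * φ i j
        = - ∑ j ∈ Finset.univ.erase i, sgnε (X j (xs i) - xs i) * φ i j := by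
      rw [← Finset.sum_neg_distrib]
      exact Finset.sum_congr rfl fun j _ => by ring
    rw [this]; ring
end
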